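/- arXiv:2011.09568 — 2 statements merged into one kernel-verified Lean document; each statement's English description precedes it below -/
import Mathlib

section
/- For all integers m,n ≥ 1 there exists a bijection r from PP(m,n) (parallelogram polyominoes of size m×n) to RP(n−1,m−1) (reduced polyominoes of size (n−1)×(m−1)) such that for every P in PP(m,n), area(P) = area(r(P)) + m + n − 1 and bounce(P) = bounce(r(P)) + m + n − 1. -/
open Finset

attribute [local instance 0] Classical.propDecidable

noncomputable section

namespace DeltaConj

abbrev QT : Type := FractionRing (MvPolynomial (Fin 2) ℚ)
def qv : QT := algebraMap (MvPolynomial (Fin 2) ℚ) QT (MvPolynomial.X 0)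
def tv : QT := algebraMap (MvPolynomial (Fin 2) ℚ) QT (MvPolynomial.X 1)
def qint (n : ℕ) : QT := ∑ i ∈ Finset.range n, qv ^ i
def qfact (n : ℕ) : QT := ∏ i ∈ Finset.range n, qint (i + 1)
def qbinom (n k : ℤ) : QT :=
  if 0 ≤ k ∧ k ≤ n then qfact n.toNat / (qfact k.toNat * qfact (n - k).toNat) else 0

/-! ## Decorated Dyck paths, encoded by their area words.

A Dyck path of size `n` is encoded by its area word `w`, a function `Fin n → Fin (n+1)`
with `w 0 = 0` which increases by at most one at each step.  A decorated Dyck path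
carries a set of decorated peaks and a set of decorated rises. -/

/-- `(area word, set of decorated peaks, set of decorated rises)`. -/
abbrev DDBase (n : ℕ) := (Fin n → Fin (n + 1)) × Finset (Fin n) × Finset (Fin n)

/-- The value of the area word at a (0-indexed) natural index, `0` out of range. -/
def wv (n : ℕ) (w : Fin n → Fin (n + 1)) (i : ℕ) : ℕ :=
  if h : i < n then (w ⟨i, h⟩ : ℕ) else 0

def IsAreaWord (n : ℕ) (w : Fin n → Fin (n + 1)) : Prop :=
  wv n w 0 = 0 ∧ ∀ i : ℕ, i + 1 < n → wv n w (i + 1) ≤ wv n w i + 1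

/-- Row `i` (0-indexed) is a rise: its north step is directly preceded by a north step. -/
def IsRise (n : ℕ) (w : Fin n → Fin (n + 1)) (i : ℕ) : Prop :=
  1 ≤ i ∧ i < n ∧ wv n w (i - 1) < wv n w i

/-- Row `i` (0-indexed) is a peak: its north step is directly followed by an east step. -/
def IsPeak (n : ℕ) (w : Fin n → Fin (n + 1)) (i : ℕ) : Prop :=
  i < n ∧ (i + 1 = n ∨ wv n w (i + 1) ≤ wv n w i)

/-- Membership in `DD(n)^{∘a,∗b}`. -/
def IsDD (n : ℕ) (a b : ℤ) (D : DDBase n) : Prop :=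
  IsAreaWord n D.1 ∧ (∀ p ∈ D.2.1, IsPeak n D.1 (p : ℕ)) ∧
    (∀ r ∈ D.2.2, IsRise n D.1 (r : ℕ)) ∧ (D.2.1.card : ℤ) = a ∧ (D.2.2.card : ℤ) = b

/-- The area of a decorated Dyck path (rows with a decorated rise do not count). -/
def ddArea (n : ℕ) (D : DDBase n) : ℕ :=
  ∑ i ∈ (range n).filter (fun i => ¬ ∃ r ∈ D.2.2, (r : ℕ) = i), wv n D.1 i

/-- The dinv of a decorated Dyck path. -/
def ddDinv (n : ℕ) (D : DDBase n) : ℕ :=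
  ((range n ×ˢ range n).filter fun ij =>
      ij.1 < ij.2 ∧ wv n D.1 ij.1 = wv n D.1 ij.2 ∧ ¬ ∃ p ∈ D.2.1, (p : ℕ) = ij.1).card +
  ((range n ×ˢ range n).filter fun ij =>
      ij.1 < ij.2 ∧ wv n D.1 ij.1 = wv n D.1 ij.2 + 1 ∧ ¬ ∃ p ∈ D.2.1, (p : ℕ) = ij.2).card

/-- The height of the east step of the path going from column `c` to column `c+1`. -/
def ddE (n : ℕ) (w : Fin n → Fin (n + 1)) (c : ℕ) : ℕ :=
  ((range n).filter fun i => i - wv n w i ≤ c).card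

/-- The heights at which the bounce path returns to the main diagonal. -/
def ddBeta (n : ℕ) (w : Fin n → Fin (n + 1)) : ℕ → ℕ
  | 0 => 0
  | k + 1 => ddE n w (ddBeta n w k)

/-- The letter of the bounce word in (0-indexed) row `i`. -/
def ddBval (n : ℕ) (w : Fin n → Fin (n + 1)) (i : ℕ) : ℕ :=
  ((Finset.Icc 1 n).filter fun k => ddBeta n w k ≤ i).card

/-- The bounce of a decorated Dyck path (rows with a decorated peak do not count). -/
def ddBounce (n : ℕ) (D : DDBase n) : ℕ :=
  ∑ i ∈ (range n).filter (fun i => ¬ ∃ p ∈ D.2.1, (p : ℕ) = i), ddBval n D.1 i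

/-- The number of zeros of the bounce word. -/
def ddBounceZeros (n : ℕ) (D : DDBase n) : ℕ :=
  ((range n).filter fun i => ddBval n D.1 i = 0).card

/-- The number of zeros of the area word. -/
def ddAreaZeros (n : ℕ) (D : DDBase n) : ℕ :=
  ((range n).filter fun i => wv n D.1 i = 0).card

/-- The column of the fall corresponding to the rise in row `i`: the first fall
(east step followed by an east step), coming after the given rise, which crosses
horizontally the diagonal which the rise crosses vertically. -/
def ddFallCol (n : ℕ) (w : Fin n → Fin (n + 1)) (i : ℕ) : ℕ :=
  if h : (((range n).filter fun x => x + 1 < n ∧ ddE n w (x + 1) = ddE n w x ∧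
        i + 1 ≤ ddE n w x ∧ ddE n w x = x + 1 + wv n w i)).Nonempty then
    (((range n).filter fun x => x + 1 < n ∧ ddE n w (x + 1) = ddE n w x ∧
        i + 1 ≤ ddE n w x ∧ ddE n w x = x + 1 + wv n w i)).min' h
  else n

/-- Membership in `DDd(n)^{∘a,∗b}`: the rightmost highest peak is not decorated. -/
def IsDDd (n : ℕ) (a b : ℤ) (D : DDBase n) : Prop :=
  IsDD n a b D ∧ ∀ p ∈ D.2.1, ∃ j : ℕ, IsPeak n D.1 j ∧
    (wv n D.1 (p : ℕ) < wv n D.1 j ∨ ((p : ℕ) < j ∧ wv n D.1 (p : ℕ) = wv n D.1 j))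

/-- Membership in `DDb(n)^{∘a,∗b}`: the peak in the leftmost column is not decorated. -/
def IsDDb (n : ℕ) (a b : ℤ) (D : DDBase n) : Prop :=
  IsDD n a b D ∧ ∀ p ∈ D.2.1, wv n D.1 (p : ℕ) ≠ (p : ℕ)

/-- Membership in `DDp(n)^{∘a,∗b}`: the peak in the top row is not decorated. -/
def IsDDp (n : ℕ) (a b : ℤ) (D : DDBase n) : Prop :=
  IsDD n a b D ∧ ∀ p ∈ D.2.1, (p : ℕ) + 1 ≠ n

/-- Number of decorated peaks strictly below height `h`. -/
def ddDel (n : ℕ) (Pk : Finset (Fin n)) (h : ℕ) : ℕ :=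
  (Pk.filter fun p => (p : ℕ) < h).card

/-- Height of the east step of the "leaning stack" path (obtained by deleting the east
step following each decorated peak) going from column `c` to column `c+1`. -/
def ddE' (n : ℕ) (w : Fin n → Fin (n + 1)) (Pk : Finset (Fin n)) (c : ℕ) : ℕ :=
  ((range n).filter fun i => i - wv n w i - ddDel n Pk i ≤ c).card

/-- The heights at which the pbounce path returns to the (shifted) main diagonal. -/
def ddGamma (n : ℕ) (w : Fin n → Fin (n + 1)) (Pk : Finset (Fin n)) : ℕ → ℕ
  | 0 => 0
  | k + 1 => ddE' n w Pk (ddGamma n w Pk k - ddDel n Pk (ddGamma n w Pk k))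

/-- The letter of the pbounce word in (0-indexed) row `i`. -/
def ddPLabel (n : ℕ) (w : Fin n → Fin (n + 1)) (Pk : Finset (Fin n)) (i : ℕ) : ℕ :=
  ((Finset.Icc 1 n).filter fun k => ddGamma n w Pk k ≤ i).card

/-- The pbounce statistic of a decorated Dyck path. -/
def ddPBounce (n : ℕ) (D : DDBase n) : ℕ :=
  ∑ i ∈ range n, ddPLabel n D.1 D.2.1 i

/-- The number of zeros of the pbounce word. -/
def ddPBounceZeros (n : ℕ) (D : DDBase n) : ℕ :=
  ((range n).filter fun i => ddPLabel n D.1 D.2.1 i = 0).card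

/-! q,t-enumerators of the various refined families of decorated Dyck paths. -/

/-- `DDb_{q,t}(n\k)^{∘a,∗b}` (bistatistic (area, bounce)). -/
def DDbE (n : ℕ) (κ a b : ℤ) : QT :=
  ∑ D ∈ univ.filter (fun D : DDBase n => IsDDb n a b D ∧ (ddBounceZeros n D : ℤ) = κ),
    qv ^ ddArea n D * tv ^ ddBounce n D

/-- `DDb_{q,t}(n\k\0)^{∘a,∗b}` (no decorated fall in the first `κ` columns). -/
def DDbE0 (n : ℕ) (κ a b : ℤ) : QT :=
  ∑ D ∈ univ.filter (fun D : DDBase n => IsDDb n a b D ∧ (ddBounceZeros n D : ℤ) = κ ∧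
      ∀ r ∈ D.2.2, κ ≤ (ddFallCol n D.1 (r : ℕ) : ℤ)),
    qv ^ ddArea n D * tv ^ ddBounce n D

/-- `DDd_{q,t}(n\k)^{∘a,∗b}` (bistatistic (dinv, area)). -/
def DDdE (n : ℕ) (κ a b : ℤ) : QT :=
  ∑ D ∈ univ.filter (fun D : DDBase n => IsDDd n a b D ∧ (ddAreaZeros n D : ℤ) = κ),
    qv ^ ddDinv n D * tv ^ ddArea n D

/-- `DDd_{q,t}(n\k\0)^{∘a,∗b}` (no decorated peak starting on the main diagonal). -/
def DDdE0 (n : ℕ) (κ a b : ℤ) : QT :=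
  ∑ D ∈ univ.filter (fun D : DDBase n => IsDDd n a b D ∧ (ddAreaZeros n D : ℤ) = κ ∧
      ∀ p ∈ D.2.1, wv n D.1 (p : ℕ) ≠ 0),
    qv ^ ddDinv n D * tv ^ ddArea n D

/-- `DDp_{q,t}(n\k\i)^{∘a,∗b}` (bistatistic (area, pbounce)). -/
def DDpE (n : ℕ) (κ ι a b : ℤ) : QT :=
  ∑ D ∈ univ.filter (fun D : DDBase n => IsDDp n a b D ∧ (ddPBounceZeros n D : ℤ) = κ ∧
      ((D.2.2.filter fun r => ((r : ℕ) : ℤ) < κ).card : ℤ) = ι),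
    qv ^ ddArea n D * tv ^ ddPBounce n D

/-- `DDp_{q,t}(n\k)^{∘a,∗b}` (bistatistic (area, pbounce)). -/
def DDpKE (n : ℕ) (κ a b : ℤ) : QT :=
  ∑ D ∈ univ.filter (fun D : DDBase n => IsDDp n a b D ∧ (ddPBounceZeros n D : ℤ) = κ),
    qv ^ ddArea n D * tv ^ ddPBounce n D

/-- `DDp_{q,t}(n)^{∘a,∗b}` (bistatistic (area, pbounce)). -/
def DDpFE (n : ℕ) (a b : ℤ) : QT :=
  ∑ D ∈ univ.filter (fun D : DDBase n => IsDDp n a b D),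
    qv ^ ddArea n D * tv ^ ddPBounce n D

/-! ## Parallelogram polyominoes and reduced polyominoes.

A pair of lattice paths from `(0,0)` to `(m,n)` is encoded by the pair of functions
recording, for each of the two paths, the height of its east step in each column. -/

/-- `(red path, green path)`, each path recorded by the heights of its `m` east steps. -/
abbrev PolyBase (m n : ℕ) := (Fin m → Fin (n + 1)) × (Fin m → Fin (n + 1))

/-- Height of the east step of the red path from column `x` to `x+1` (`n` out of range). -/
def rH (m n : ℕ) (P : PolyBase m n) (x : ℕ) : ℕ := if h : x < m then (P.1 ⟨x, h⟩ : ℕ) else n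

/-- Height of the east step of the green path from column `x` to `x+1` (`n` out of range). -/
def gH (m n : ℕ) (P : PolyBase m n) (x : ℕ) : ℕ := if h : x < m then (P.2 ⟨x, h⟩ : ℕ) else n

/-- `P` is a parallelogram polyomino of size `m × n`: both paths are monotone, the red
path starts north and ends east, the green path starts east and ends north, and the red
path stays strictly above the green path except at the two endpoints. -/
def IsPP (m n : ℕ) (P : PolyBase m n) : Prop :=
  (∀ x y : ℕ, x ≤ y → rH m n P x ≤ rH m n P y) ∧
  (∀ x y : ℕ, x ≤ y → gH m n P x ≤ gH m n P y) ∧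
  gH m n P 0 = 0 ∧ rH m n P (m - 1) = n ∧
  (∀ x : ℕ, 1 ≤ x → x ≤ m - 1 → gH m n P x < rH m n P (x - 1))

/-- `P` is a reduced polyomino of size `m × n`: both paths are monotone and the red path
stays weakly above the green path. -/
def IsRP (m n : ℕ) (P : PolyBase m n) : Prop :=
  (∀ x y : ℕ, x ≤ y → rH m n P x ≤ rH m n P y) ∧
  (∀ x y : ℕ, x ≤ y → gH m n P x ≤ gH m n P y) ∧
  (∀ x : ℕ, gH m n P x ≤ rH m n P x)

/-- The area of a (parallelogram or reduced) polyomino: the number of whole squares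
between the two paths. -/
def polyArea (m n : ℕ) (P : PolyBase m n) : ℕ := ∑ x ∈ range m, (rH m n P x - gH m n P x)

/-- The corners `(column, height)` of the bounce path of a parallelogram polyomino. -/
def ppSeq (m n : ℕ) (P : PolyBase m n) : ℕ → ℕ × ℕ
  | 0 => (1, 0)
  | k + 1 =>
      (((range m).filter fun x => gH m n P x < rH m n P ((ppSeq m n P k).1 - 1)).card,
        rH m n P ((ppSeq m n P k).1 - 1))

/-- Value of the letter of the bounce word of a parallelogram polyomino attached to the
north bounce step reaching height `y`. -/
def ppVval (m n : ℕ) (P : PolyBase m n) (y : ℕ) : ℕ :=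
  ((range (m + n + 1)).filter fun k => (ppSeq m n P k).2 < y).card

/-- Value of the letter of the bounce word of a parallelogram polyomino attached to the
east bounce step crossing from column `x` to `x+1`. -/
def ppBval (m n : ℕ) (P : PolyBase m n) (x : ℕ) : ℕ :=
  ((range (m + n + 1)).filter fun k => (ppSeq m n P k).1 ≤ x).card

/-- The bounce of an (undecorated) parallelogram polyomino. -/
def ppBounce (m n : ℕ) (P : PolyBase m n) : ℕ :=
  (∑ y ∈ Finset.Icc 1 n, ppVval m n P y) + ∑ x ∈ range m, ppBval m n P x

/-- The number of letters `1` in the bounce word of a parallelogram polyomino. -/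
def ppOnesB (m n : ℕ) (P : PolyBase m n) : ℕ :=
  ((Finset.Icc 1 n).filter fun y => ppVval m n P y = 1).card

/-- Membership in `PP(m,n)^{∘k}`: a parallelogram polyomino with `k` decorated red peaks
(a red peak in column `x ≥ 1` is an east red step directly preceded by a north red step;
the leftmost red peak, in column `0`, is never decorated). -/
def IsPPpk (m n : ℕ) (k : ℤ) (P : PolyBase m n × Finset (Fin m)) : Prop :=
  IsPP m n P.1 ∧
  (∀ x ∈ P.2, 1 ≤ (x : ℕ) ∧ rH m n P.1 ((x : ℕ) - 1) < rH m n P.1 (x : ℕ)) ∧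
  (P.2.card : ℤ) = k

/-- The bounce of a peak-decorated parallelogram polyomino: letters of horizontal bounce
steps lying in the same column as a decorated red peak are not counted. -/
def ppBounceD (m n : ℕ) (P : PolyBase m n × Finset (Fin m)) : ℕ :=
  (∑ y ∈ Finset.Icc 1 n, ppVval m n P.1 y) +
    ∑ x ∈ (range m).filter (fun x => ¬ ∃ p ∈ P.2, (p : ℕ) = x), ppBval m n P.1 x

/-- The (0-indexed) `i`-th step of the red path is an east step. -/
def polyRedE (m n : ℕ) (P : PolyBase m n) (i : ℕ) : Prop := ∃ x, x < m ∧ i = rH m n P x + x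

/-- The (0-indexed) `i`-th step of the green path is an east step. -/
def polyGreenE (m n : ℕ) (P : PolyBase m n) (i : ℕ) : Prop := ∃ x, x < m ∧ i = gH m n P x + x

/-- The word (`True` = north) of the Dyck path of size `m+n` obtained from a parallelogram
polyomino by interleaving red and green steps, a north step corresponding to a red north
step or a green east step (padded by `True` beyond the end). -/
def ppW (m n : ℕ) (P : PolyBase m n) (k : ℕ) : Prop :=
  if k < 2 * (m + n) then
    (if k % 2 = 0 then ¬ polyRedE m n P (k / 2) else polyGreenE m n P (k / 2))
  else True

/-- Heights along the interleaved Dyck path. -/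
def ppHt (m n : ℕ) (P : PolyBase m n) : ℕ → ℕ
  | 0 => 0
  | k + 1 => if ppW m n P k then ppHt m n P k + 1 else ppHt m n P k - 1

/-- The rank (position in the ordered alphabet `0̄ < 1 < 1̄ < 2 < 2̄ < ⋯`) of the
(0-indexed) `i`-th letter of the area word of a parallelogram polyomino. -/
def ppRank (m n : ℕ) (P : PolyBase m n) (i : ℕ) : ℕ := ppHt m n P (Nat.nth (ppW m n P) i)

/-- The numerical value (ignoring the bar) of the `i`-th letter of the area word. -/
def ppVal (m n : ℕ) (P : PolyBase m n) (i : ℕ) : ℕ := (ppRank m n P i + 1) / 2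

/-- The dinv of a parallelogram polyomino: the number of pairs `i < j` such that the
`j`-th letter of the area word is the successor of the `i`-th letter. -/
def ppDinv (m n : ℕ) (P : PolyBase m n) : ℕ :=
  ((range (m + n) ×ˢ range (m + n)).filter fun ij =>
    ij.1 < ij.2 ∧ ppRank m n P ij.2 = ppRank m n P ij.1 + 1).card

/-- The number of letters `1` in the area word of a parallelogram polyomino. -/
def ppOnesA (m n : ℕ) (P : PolyBase m n) : ℕ :=
  ((range (m + n)).filter fun i => ppRank m n P i = 1).card

/-- Membership in `PP(m,n)^{∗k}`: a parallelogram polyomino with `k` decorated rises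
(the initial `0̄1` rise is never decorated). -/
def IsPPrise (m n : ℕ) (k : ℤ) (P : PolyBase m n × Finset (Fin (m + n))) : Prop :=
  IsPP m n P.1 ∧
  (∀ i ∈ P.2, 1 ≤ (i : ℕ) ∧ (i : ℕ) + 1 < m + n ∧
    ppVal m n P.1 (i : ℕ) < ppVal m n P.1 ((i : ℕ) + 1)) ∧
  (P.2.card : ℤ) = k

/-- The area of a rise-decorated parallelogram polyomino. -/
def ppAreaD (m n : ℕ) (P : PolyBase m n × Finset (Fin (m + n))) : ℕ :=
  ∑ i ∈ (range (m + n)).filter (fun i => ¬ ∃ s ∈ P.2, (s : ℕ) = i), ppVal m n P.1 i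

/-- `PP_{q,t}(m\r, n)^{∗k}`, the (dinv, area) q,t-enumerator. -/
def PPrE (m n : ℕ) (ρ k : ℤ) : QT :=
  ∑ P ∈ univ.filter (fun P : PolyBase m n × Finset (Fin (m + n)) =>
      IsPPrise m n k P ∧ (ppOnesA m n P.1 : ℤ) = ρ),
    qv ^ ppDinv m n P.1 * tv ^ ppAreaD m n P

/-- `PP_{q,t}(m, n\s)^{∘k}`, the (area, bounce) q,t-enumerator. -/
def PPpE (m n : ℕ) (σ k : ℤ) : QT :=
  ∑ P ∈ univ.filter (fun P : PolyBase m n × Finset (Fin m) =>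
      IsPPpk m n k P ∧ (ppOnesB m n P.1 : ℤ) = σ),
    qv ^ polyArea m n P.1 * tv ^ ppBounceD m n P

/-! ### Reduced polyominoes -/

/-- The corners `(column, height)` of the bounce path of a reduced polyomino. -/
def rpSeq (m n : ℕ) (P : PolyBase m n) : ℕ → ℕ × ℕ
  | 0 => (0, 0)
  | k + 1 =>
      ((((range m).filter fun x => gH m n P x ≤ (rpSeq m n P k).2)).card,
        rH m n P ((((range m).filter fun x => gH m n P x ≤ (rpSeq m n P k).2)).card))

/-- Value of the letter of the bounce word of a reduced polyomino attached to the east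
bounce step crossing from column `x` to `x+1`. -/
def rpHval (m n : ℕ) (P : PolyBase m n) (x : ℕ) : ℕ :=
  ((Finset.Icc 1 (m + n + 1)).filter fun k => (rpSeq m n P k).1 ≤ x).card

/-- Value of the letter of the bounce word of a reduced polyomino attached to the north
bounce step reaching height `y`. -/
def rpVval (m n : ℕ) (P : PolyBase m n) (y : ℕ) : ℕ :=
  ((Finset.Icc 1 (m + n + 1)).filter fun k => (rpSeq m n P k).2 < y).card

/-- The bounce of an (undecorated) reduced polyomino. -/
def rpBounce (m n : ℕ) (P : PolyBase m n) : ℕ :=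
  (∑ x ∈ range m, rpHval m n P x) + ∑ y ∈ Finset.Icc 1 n, rpVval m n P y

/-- The number of letters `0` in the bounce word of a reduced polyomino. -/
def rpBounceZeros (m n : ℕ) (P : PolyBase m n) : ℕ :=
  ((range m).filter fun x => rpHval m n P x = 0).card

/-- The green east step in column `x` is a green peak (directly preceded by a green
north step). -/
def IsGreenPeak (m n : ℕ) (P : PolyBase m n) (x : ℕ) : Prop :=
  x < m ∧ (if x = 0 then 1 ≤ gH m n P 0 else gH m n P (x - 1) < gH m n P x)

/-- Membership in `RP(m,n)^{∘k}`: a reduced polyomino with `k` decorated green peaks. -/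
def IsRPpk (m n : ℕ) (k : ℤ) (P : PolyBase m n × Finset (Fin m)) : Prop :=
  IsRP m n P.1 ∧ (∀ x ∈ P.2, IsGreenPeak m n P.1 (x : ℕ)) ∧ (P.2.card : ℤ) = k

/-- The bounce of a peak-decorated reduced polyomino. -/
def rpBounceD (m n : ℕ) (P : PolyBase m n × Finset (Fin m)) : ℕ :=
  (∑ x ∈ (range m).filter (fun x => ¬ ∃ p ∈ P.2, (p : ℕ) = x), rpHval m n P.1 x) +
    ∑ y ∈ Finset.Icc 1 n, rpVval m n P.1 y

/-- The word (`True` = north) of the Dyck path of size `m+n+1` obtained from a reduced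
polyomino by prepending a north step to the red path, appending an east step to the
green path and interleaving (padded by `True` beyond the end). -/
def rpW (m n : ℕ) (P : PolyBase m n) (k : ℕ) : Prop :=
  if k = 0 then True
  else if k ≤ 2 * (m + n) then
    (if k % 2 = 1 then ¬ polyRedE m n P ((k - 1) / 2) else polyGreenE m n P (k / 2 - 1))
  else if k = 2 * (m + n) + 1 then False
  else True

/-- Heights along the interleaved Dyck path of a reduced polyomino. -/
def rpHt (m n : ℕ) (P : PolyBase m n) : ℕ → ℕ
  | 0 => 0
  | k + 1 => if rpW m n P k then rpHt m n P k + 1 else rpHt m n P k - 1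

/-- The rank (position in the ordered alphabet `0 < 0̄ < 1 < 1̄ < ⋯`) of the
(0-indexed) `i`-th letter of the area word of a reduced polyomino. -/
def rpRank (m n : ℕ) (P : PolyBase m n) (i : ℕ) : ℕ := rpHt m n P (Nat.nth (rpW m n P) i)

/-- The numerical value (ignoring the bar) of the `i`-th letter of the area word. -/
def rpVal (m n : ℕ) (P : PolyBase m n) (i : ℕ) : ℕ := rpRank m n P i / 2

/-- The dinv of a reduced polyomino: the number of pairs `i < j` such that the `i`-th
letter of the area word is the successor of the `j`-th letter. -/
def rpDinv (m n : ℕ) (P : PolyBase m n) : ℕ :=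
  ((range (m + n + 1) ×ˢ range (m + n + 1)).filter fun ij =>
    ij.1 < ij.2 ∧ rpRank m n P ij.1 = rpRank m n P ij.2 + 1).card

/-- The number of letters `0` in the area word of a reduced polyomino. -/
def rpAreaZeros (m n : ℕ) (P : PolyBase m n) : ℕ :=
  ((range (m + n + 1)).filter fun i => rpRank m n P i = 0).card

/-- The (0-indexed) index `i` of the area word of a reduced polyomino is a rise. -/
def IsRPRiseAt (m n : ℕ) (P : PolyBase m n) (i : ℕ) : Prop :=
  1 ≤ i ∧ i < m + n + 1 ∧ rpVal m n P (i - 1) < rpVal m n P i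

/-- Membership in `RP(m,n)^{∗k}`: a reduced polyomino with `k` decorated rises. -/
def IsRPrise (m n : ℕ) (k : ℤ) (P : PolyBase m n × Finset (Fin (m + n + 1))) : Prop :=
  IsRP m n P.1 ∧ (∀ i ∈ P.2, IsRPRiseAt m n P.1 (i : ℕ)) ∧ (P.2.card : ℤ) = k

/-- The area of a rise-decorated reduced polyomino. -/
def rpAreaD (m n : ℕ) (P : PolyBase m n × Finset (Fin (m + n + 1))) : ℕ :=
  ∑ i ∈ (range (m + n + 1)).filter (fun i => ¬ ∃ s ∈ P.2, (s : ℕ) = i), rpVal m n P.1 i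

/-- `RP_{q,t}(m\r, n)^{∗k}`, the (dinv, area) q,t-enumerator. -/
def RPrE (m n : ℕ) (ρ k : ℤ) : QT :=
  ∑ P ∈ univ.filter (fun P : PolyBase m n × Finset (Fin (m + n + 1)) =>
      IsRPrise m n k P ∧ (rpAreaZeros m n P.1 : ℤ) = ρ),
    qv ^ rpDinv m n P.1 * tv ^ rpAreaD m n P

/-- `RP_{q,t}(m\r, n)^{∘k}`, the (area, bounce) q,t-enumerator. -/
def RPpE (m n : ℕ) (ρ k : ℤ) : QT :=
  ∑ P ∈ univ.filter (fun P : PolyBase m n × Finset (Fin m) =>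
      IsRPpk m n k P ∧ (rpBounceZeros m n P.1 : ℤ) = ρ - 1),
    qv ^ polyArea m n P.1 * tv ^ rpBounceD m n P

/-! ## Labelled Dyck paths: the pmaj statistic, two car parking functions,
partially labelled Dyck paths, and labelled parallelogram polyominoes. -/

/-- The multiset of labels in column `c` of a labelled Dyck path with area word `w`
and labels `l` (the row `i` lies in column `i - w i`). -/
def ldColLab (N : ℕ) (w l : ℕ → ℕ) (c : ℕ) : Multiset ℕ :=
  (((range N).filter fun i => i - w i = c)).val.map l

/-- The pair `(Cᵢ, pᵢ)` of the parking algorithm computing the parking word of a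
labelled Dyck path: `ldPAux N w l k = (C_(k+1), p_(k+1))`. -/
def ldPAux (N : ℕ) (w l : ℕ → ℕ) : ℕ → Multiset ℕ × ℕ
  | 0 => (ldColLab N w l 0, (ldColLab N w l 0).sup)
  | k + 1 =>
      let prev := ldPAux N w l k
      let C := prev.1.erase prev.2 + ldColLab N w l (k + 1)
      let F := C.filter fun x => x ≤ prev.2
      (C, if F = 0 then C.sup else F.sup)

/-- The (0-indexed) `i`-th letter of the parking word of a labelled Dyck path. -/
def ldPword (N : ℕ) (w l : ℕ → ℕ) (i : ℕ) : ℕ := (ldPAux N w l i).2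

/-- The pmaj statistic of a labelled Dyck path with area word `w` and labels `l`:
the major index of the reversed parking word. -/
def ldPmaj (N : ℕ) (w l : ℕ → ℕ) : ℕ :=
  ∑ i ∈ range (N - 1), if ldPword N w l i < ldPword N w l (i + 1) then N - 1 - i else 0

/-! ### Two car parking functions -/

/-- `(area word, labels (all equal to 1 or 2), decorated rises)`. -/
abbrev PF2Base (m n : ℕ) :=
  (Fin (m + n) → Fin (m + n + 1)) × (Fin (m + n) → Fin 3) × Finset (Fin (m + n))

/-- The label of row `i`, as a natural number (`0` out of range). -/
def lv3 (m n : ℕ) (l : Fin (m + n) → Fin 3) (i : ℕ) : ℕ :=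
  if h : i < m + n then (l ⟨i, h⟩ : ℕ) else 0

/-- Membership in `PF²(m\r, n)^{∗k}`: a labelled Dyck path of size `m+n` with `n` labels
equal to `1` and `m` labels equal to `2`, labels strictly increasing in columns, `r-1`
labels `2` in rows starting on the main diagonal, and `k` decorated rises. -/
def IsPF2 (m n : ℕ) (ρ k : ℤ) (D : PF2Base m n) : Prop :=
  IsAreaWord (m + n) D.1 ∧
  (∀ i : ℕ, i < m + n → lv3 m n D.2.1 i = 1 ∨ lv3 m n D.2.1 i = 2) ∧
  ((range (m + n)).filter fun i => lv3 m n D.2.1 i = 1).card = n ∧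
  ((range (m + n)).filter fun i => lv3 m n D.2.1 i = 2).card = m ∧
  (∀ i : ℕ, IsRise (m + n) D.1 i → lv3 m n D.2.1 (i - 1) < lv3 m n D.2.1 i) ∧
  (∀ r ∈ D.2.2, IsRise (m + n) D.1 (r : ℕ)) ∧ (D.2.2.card : ℤ) = k ∧
  (((range (m + n)).filter fun i =>
      wv (m + n) D.1 i = 0 ∧ lv3 m n D.2.1 i = 2).card : ℤ) = ρ - 1

/-- The dinv of a labelled Dyck path with labels in `{1,2}`. -/
def pf2Dinv (m n : ℕ) (D : PF2Base m n) : ℕ :=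
  ((range (m + n) ×ˢ range (m + n)).filter fun ij =>
      ij.1 < ij.2 ∧ wv (m + n) D.1 ij.1 = wv (m + n) D.1 ij.2 ∧
        lv3 m n D.2.1 ij.1 < lv3 m n D.2.1 ij.2).card +
  ((range (m + n) ×ˢ range (m + n)).filter fun ij =>
      ij.1 < ij.2 ∧ wv (m + n) D.1 ij.1 = wv (m + n) D.1 ij.2 + 1 ∧
        lv3 m n D.2.1 ij.2 < lv3 m n D.2.1 ij.1).card

/-- The area of a rise-decorated two car parking function. -/
def pf2Area (m n : ℕ) (D : PF2Base m n) : ℕ :=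
  ∑ i ∈ (range (m + n)).filter (fun i => ¬ ∃ s ∈ D.2.2, (s : ℕ) = i), wv (m + n) D.1 i

/-! ### Partially labelled Dyck paths -/

/-- `(area word, labels (nonnegative integers), decorated rises)`. -/
abbrev PLDBase (N : ℕ) := (Fin N → Fin (N + 1)) × (Fin N → ℕ) × Finset (Fin N)

/-- The label of row `i`, as a natural number (`0` out of range). -/
def lvN (N : ℕ) (l : Fin N → ℕ) (i : ℕ) : ℕ := if h : i < N then l ⟨i, h⟩ else 0

/-- Membership in `PLD(mz, nz)^{∗k}`: a partially labelled Dyck path of size `mz + nz`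
with `mz` labels equal to `0` and `nz` nonzero labels, labels strictly increasing in
columns, no `0` label in the first column, and `k` decorated rises. -/
def IsPLD (mz nz k : ℕ) (D : PLDBase (mz + nz)) : Prop :=
  IsAreaWord (mz + nz) D.1 ∧
  ((range (mz + nz)).filter fun i => lvN (mz + nz) D.2.1 i = 0).card = mz ∧
  ((range (mz + nz)).filter fun i => lvN (mz + nz) D.2.1 i ≠ 0).card = nz ∧
  (∀ i : ℕ, IsRise (mz + nz) D.1 i → lvN (mz + nz) D.2.1 (i - 1) < lvN (mz + nz) D.2.1 i) ∧
  (∀ i : ℕ, i < mz + nz → wv (mz + nz) D.1 i = i → lvN (mz + nz) D.2.1 i ≠ 0) ∧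
  (∀ r ∈ D.2.2, IsRise (mz + nz) D.1 (r : ℕ)) ∧ D.2.2.card = k

/-- The area of a rise-decorated partially labelled Dyck path. -/
def pldArea (mz nz : ℕ) (D : PLDBase (mz + nz)) : ℕ :=
  ∑ i ∈ (range (mz + nz)).filter (fun i => ¬ ∃ s ∈ D.2.2, (s : ℕ) = i), wv (mz + nz) D.1 i

/-- The pmaj of a partially labelled Dyck path. -/
def pldPmaj (mz nz : ℕ) (D : PLDBase (mz + nz)) : ℕ :=
  ldPmaj (mz + nz) (wv (mz + nz) D.1) (lvN (mz + nz) D.2.1)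

/-! ### Labelled parallelogram polyominoes -/

/-- A parallelogram polyomino together with labels on the `n` north steps of the red path. -/
abbrev LPPBase (m n : ℕ) := PolyBase m n × (Fin n → ℕ)

/-- The column of the (0-indexed) `y`-th north step of the red path. -/
def colOfNorth (m n : ℕ) (P : PolyBase m n) (y : ℕ) : ℕ :=
  ((range m).filter fun x => rH m n P x ≤ y).card

/-- Membership in `LPP(m,n)`: a labelled parallelogram polyomino (positive labels,
strictly increasing within each column). -/
def IsLPP (m n : ℕ) (L : LPPBase m n) : Prop :=
  IsPP m n L.1 ∧ (∀ y : Fin n, 1 ≤ L.2 y) ∧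
  (∀ y : ℕ, y + 1 < n → colOfNorth m n L.1 y = colOfNorth m n L.1 (y + 1) →
    lvN n L.2 y < lvN n L.2 (y + 1))

/-- The multiset of labels in column `c` of a labelled parallelogram polyomino. -/
def lppColLab (m n : ℕ) (L : LPPBase m n) (c : ℕ) : Multiset ℕ :=
  (((range n).filter fun y => colOfNorth m n L.1 y = c)).val.map (lvN n L.2)

/-- The pair `(Cᵢ, pᵢ)` of the parking algorithm computing the parking word of a
labelled parallelogram polyomino: `lppAux m n L j = (C_(j+1), p_(j+1))`. -/
def lppAux (m n : ℕ) (L : LPPBase m n) : ℕ → Multiset ℕ × ℕ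
  | 0 => (lppColLab m n L 0, (lppColLab m n L 0).sup)
  | j + 1 =>
      let prev := lppAux m n L j
      let C0 := prev.1.erase prev.2
      let C := if polyGreenE m n L.1 (j + 1)
        then C0 + (0 ::ₘ lppColLab m n L (((range m).filter fun x => gH m n L.1 x + x < j + 1).card))
        else C0
      let F := C.filter fun x => x ≤ prev.2
      (C, if F = 0 then C.sup else F.sup)

/-- The (0-indexed) `j`-th letter of the parking word of a labelled parallelogram
polyomino. -/
def lppPword (m n : ℕ) (L : LPPBase m n) (j : ℕ) : ℕ := (lppAux m n L j).2

/-- The pmaj of a labelled parallelogram polyomino: the major index of the reversed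
parking word, plus `m + n - 1`. -/
def lppPmaj (m n : ℕ) (L : LPPBase m n) : ℕ :=
  (∑ j ∈ range (m + n - 2),
      if lppPword m n L j < lppPword m n L (j + 1) then m + n - 2 - j else 0) + (m + n - 1)

/-- The area of a labelled parallelogram polyomino. -/
def lppArea (m n : ℕ) (L : LPPBase m n) : ℕ := polyArea m n L.1


/-! ### Auxiliary material for Statement 8 -/

section Statement8Aux

private lemma s8_filter_range_lt (N v : ℕ) (hv : v ≤ N) :
    ((range N).filter fun c => c < v).card = v := by
  have h : (range N).filter (fun c => c < v) = range v := by
    ext a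
    simp only [mem_filter, mem_range]
    omega
  rw [h, card_range]

private lemma s8_filter_range_ge (N a : ℕ) (_ : a ≤ N) :
    ((range N).filter fun c => a ≤ c).card = N - a := by
  have h : (range N).filter (fun c => a ≤ c) = Finset.Ico a N := by
    ext x
    simp only [mem_filter, mem_range, Finset.mem_Ico]
    omega
  rw [h, Nat.card_Ico]

/-- Key "transpose" lemma for counts of monotone step functions. -/
private lemma s8_lemT {M N : ℕ} {h : ℕ → ℕ} (mono : ∀ a b : ℕ, a ≤ b → h a ≤ h b)
    {x : ℕ} (hx : x < M) (hbd : h x ≤ N) :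
    ((range N).filter fun c => ((range M).filter fun x' => h x' ≤ c).card ≤ x).card = h x := by
  have key : ∀ c : ℕ, (((range M).filter fun x' => h x' ≤ c).card ≤ x) ↔ c < h x := by
    intro c
    constructor
    · intro hc
      by_contra hcon
      push_neg at hcon
      have hsub : range (x + 1) ⊆ (range M).filter fun x' => h x' ≤ c := by
        intro a ha
        simp only [mem_range] at ha
        simp only [mem_filter, mem_range]
        exact ⟨by omega, le_trans (mono a x (by omega)) hcon⟩
      have hcard := card_le_card hsub
      rw [card_range] at hcard
      omega
    · intro hc
      have hsub : ((range M).filter fun x' => h x' ≤ c) ⊆ range x := by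
        intro a ha
        simp only [mem_filter, mem_range] at ha
        simp only [mem_range]
        by_contra hcon
        push_neg at hcon
        have := le_trans (mono x a hcon) ha.2
        omega
      have hcard := card_le_card hsub
      rwa [card_range] at hcard
  rw [filter_congr (fun c _ => key c)]
  exact s8_filter_range_lt N (h x) hbd

private lemma s8_count_shift (M : ℕ) (hM : 1 ≤ M) (p : ℕ → Prop) [DecidablePred p] (hp0 : p 0) :
    ((range M).filter p).card = ((range (M - 1)).filter fun x => p (x + 1)).card + 1 := by
  have himg : (range M).filter p
      = insert 0 (((range (M - 1)).filter fun x => p (x + 1)).image (· + 1)) := by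
    ext a
    simp only [mem_insert, mem_image, mem_filter, mem_range]
    constructor
    · rintro ⟨ha, hpa⟩
      rcases Nat.eq_zero_or_pos a with rfl | hpos
      · exact Or.inl rfl
      · exact Or.inr ⟨a - 1, ⟨by omega, by rwa [Nat.sub_add_cancel hpos]⟩, by omega⟩
    · rintro (rfl | ⟨b, ⟨hb, hpb⟩, rfl⟩)
      · exact ⟨by omega, hp0⟩
      · exact ⟨by omega, hpb⟩
  rw [himg, card_insert_of_notMem (by
      simp only [mem_image, mem_filter, mem_range]
      rintro ⟨b, _, hb⟩
      omega),
    card_image_of_injective _ (fun a b hab => by omega)]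

private lemma s8_rH_le {m n : ℕ} (P : PolyBase m n) (x : ℕ) : rH m n P x ≤ n := by
  unfold rH
  split
  · exact Nat.lt_succ_iff.mp (Fin.is_lt _)
  · exact le_refl n

private lemma s8_gH_le {m n : ℕ} (P : PolyBase m n) (x : ℕ) : gH m n P x ≤ n := by
  unfold gH
  split
  · exact Nat.lt_succ_iff.mp (Fin.is_lt _)
  · exact le_refl n

private lemma s8_rH_oor {m n : ℕ} (P : PolyBase m n) {x : ℕ} (hx : m ≤ x) :
    rH m n P x = n := dif_neg (by omega)

private lemma s8_gH_oor {m n : ℕ} (P : PolyBase m n) {x : ℕ} (hx : m ≤ x) :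
    gH m n P x = n := dif_neg (by omega)

private lemma s8_rH_fin {m n : ℕ} (P : PolyBase m n) (x : Fin m) :
    rH m n P (x : ℕ) = P.1 x := by
  unfold rH
  rw [dif_pos x.isLt, Fin.eta]

private lemma s8_gH_fin {m n : ℕ} (P : PolyBase m n) (x : Fin m) :
    gH m n P (x : ℕ) = P.2 x := by
  unfold gH
  rw [dif_pos x.isLt, Fin.eta]

private lemma s8_rH_pos {m n : ℕ} {P : PolyBase m n} (hn : 1 ≤ n) (hP : IsPP m n P)
    (x : ℕ) : 1 ≤ rH m n P x := by
  rcases lt_or_ge x (m - 1) with h | h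
  · have h1 := hP.2.2.2.2 (x + 1) (by omega) (by omega)
    simp only [Nat.add_sub_cancel] at h1
    omega
  · have h2 := hP.1 (m - 1) x h
    rw [hP.2.2.2.1] at h2
    omega

private lemma s8_gH_lt {m n : ℕ} {P : PolyBase m n} (hn : 1 ≤ n) (hP : IsPP m n P)
    {x : ℕ} (hx : x < m) : gH m n P x < n := by
  rcases Nat.eq_zero_or_pos x with rfl | hpos
  · rw [hP.2.2.1]; omega
  · have h1 := hP.2.2.2.2 x hpos (by omega)
    have h2 := s8_rH_le P (x - 1)
    omega

private lemma s8_key {m n : ℕ} {P : PolyBase m n} (hP : IsPP m n P)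
    {x : ℕ} (hx : x < m - 1) : gH m n P (x + 1) < rH m n P x := by
  have h1 := hP.2.2.2.2 (x + 1) (by omega) (by omega)
  simpa using h1

private lemma s8_gH_le_rH {m n : ℕ} {P : PolyBase m n} (hP : IsPP m n P) (x : ℕ) :
    gH m n P x ≤ rH m n P x := by
  rcases Nat.eq_zero_or_pos x with rfl | hpos
  · rw [hP.2.2.1]; exact Nat.zero_le _
  · rcases lt_or_ge x m with hx | hx
    · have h1 := hP.2.2.2.2 x hpos (by omega)
      have h2 := hP.1 (x - 1) x (by omega)
      omega
    · rw [s8_gH_oor P hx, s8_rH_oor P hx]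

/-- The bijection `PP(m,n) → RP(n-1,m-1)`: trim the bounding steps and transpose. -/
private def toRP (m n : ℕ) (P : PolyBase m n) : PolyBase (n - 1) (m - 1) :=
  (fun c => ⟨((range (m - 1)).filter fun x => gH m n P (x + 1) ≤ (c : ℕ)).card,
      Nat.lt_succ_of_le ((card_filter_le _ _).trans_eq (card_range _))⟩,
   fun c => ⟨((range (m - 1)).filter fun x => rH m n P x ≤ (c : ℕ) + 1).card,
      Nat.lt_succ_of_le ((card_filter_le _ _).trans_eq (card_range _))⟩)

private lemma toRP_rH {m n : ℕ} (P : PolyBase m n) {c : ℕ} (hc : c < n - 1) :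
    rH (n - 1) (m - 1) (toRP m n P) c
      = ((range (m - 1)).filter fun x => gH m n P (x + 1) ≤ c).card := by
  unfold rH toRP
  rw [dif_pos hc]

private lemma toRP_gH {m n : ℕ} (P : PolyBase m n) {c : ℕ} (hc : c < n - 1) :
    gH (n - 1) (m - 1) (toRP m n P) c
      = ((range (m - 1)).filter fun x => rH m n P x ≤ c + 1).card := by
  unfold gH toRP
  rw [dif_pos hc]

/-- The inverse bijection `RP(n-1,m-1) → PP(m,n)`. -/
private def toPP (m n : ℕ) (Q : PolyBase (n - 1) (m - 1)) : PolyBase m n :=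
  (fun x => if (x : ℕ) + 1 = m then ⟨n, Nat.lt_succ_self n⟩
    else ⟨min (((range (n - 1)).filter fun c => gH (n - 1) (m - 1) Q c ≤ (x : ℕ)).card + 1) n,
      Nat.lt_succ_of_le (min_le_right _ _)⟩,
   fun x => if (x : ℕ) = 0 then ⟨0, Nat.succ_pos n⟩
    else ⟨((range (n - 1)).filter fun c => rH (n - 1) (m - 1) Q c ≤ (x : ℕ) - 1).card,
      Nat.lt_succ_of_le (le_trans ((card_filter_le _ _).trans_eq (card_range _)) (by omega))⟩)

private lemma toPP_rH {m n : ℕ} (Q : PolyBase (n - 1) (m - 1)) (hn : 1 ≤ n)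
    {x : ℕ} (hx : x < m - 1) :
    rH m n (toPP m n Q) x
      = ((range (n - 1)).filter fun c => gH (n - 1) (m - 1) Q c ≤ x).card + 1 := by
  unfold rH toPP
  rw [dif_pos (show x < m by omega)]
  simp only [if_neg (show ¬ ((⟨x, show x < m by omega⟩ : Fin m) : ℕ) + 1 = m by simp; omega)]
  have hle : ((range (n - 1)).filter fun c =>
      gH (n - 1) (m - 1) Q c ≤ ((⟨x, show x < m by omega⟩ : Fin m) : ℕ)).card + 1 ≤ n := by
    have := (card_filter_le (range (n - 1))
      (fun c => gH (n - 1) (m - 1) Q c ≤ ((⟨x, show x < m by omega⟩ : Fin m) : ℕ))).trans_eq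
      (card_range _)
    omega
  simp only [min_eq_left hle]

private lemma toPP_rH_top {m n : ℕ} (Q : PolyBase (n - 1) (m - 1)) (hm : 1 ≤ m)
    {x : ℕ} (hx : m - 1 ≤ x) : rH m n (toPP m n Q) x = n := by
  rcases lt_or_ge x m with h | h
  · unfold rH toPP
    rw [dif_pos h]
    simp only [if_pos (show ((⟨x, h⟩ : Fin m) : ℕ) + 1 = m by simp; omega)]
  · exact s8_rH_oor _ h

private lemma toPP_gH0 {m n : ℕ} (Q : PolyBase (n - 1) (m - 1)) (hm : 1 ≤ m) :
    gH m n (toPP m n Q) 0 = 0 := by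
  unfold gH toPP
  rw [dif_pos (show 0 < m by omega)]
  simp

private lemma toPP_gH {m n : ℕ} (Q : PolyBase (n - 1) (m - 1))
    {x : ℕ} (h1 : 1 ≤ x) (hx : x < m) :
    gH m n (toPP m n Q) x
      = ((range (n - 1)).filter fun c => rH (n - 1) (m - 1) Q c ≤ x - 1).card := by
  unfold gH toPP
  rw [dif_pos hx]
  simp only [if_neg (show ¬ ((⟨x, hx⟩ : Fin m) : ℕ) = 0 by simp; omega)]

private lemma toRP_isRP {m n : ℕ} {P : PolyBase m n} (hm : 1 ≤ m) (hn : 1 ≤ n)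
    (hP : IsPP m n P) : IsRP (n - 1) (m - 1) (toRP m n P) := by
  refine ⟨?_, ?_, ?_⟩
  · intro x y hxy
    rcases lt_or_ge y (n - 1) with hy | hy
    · have hx : x < n - 1 := by omega
      rw [toRP_rH P hx, toRP_rH P hy]
      refine card_le_card (fun a ha => ?_)
      simp only [mem_filter, mem_range] at ha ⊢
      exact ⟨ha.1, ha.2.trans hxy⟩
    · rw [s8_rH_oor _ hy]
      rcases lt_or_ge x (n - 1) with hx | hx
      · rw [toRP_rH P hx]
        exact (card_filter_le _ _).trans_eq (card_range _)
      · rw [s8_rH_oor _ hx]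
  · intro x y hxy
    rcases lt_or_ge y (n - 1) with hy | hy
    · have hx : x < n - 1 := by omega
      rw [toRP_gH P hx, toRP_gH P hy]
      refine card_le_card (fun a ha => ?_)
      simp only [mem_filter, mem_range] at ha ⊢
      exact ⟨ha.1, ha.2.trans (by omega)⟩
    · rw [s8_gH_oor _ hy]
      rcases lt_or_ge x (n - 1) with hx | hx
      · rw [toRP_gH P hx]
        exact (card_filter_le _ _).trans_eq (card_range _)
      · rw [s8_gH_oor _ hx]
  · intro x
    rcases lt_or_ge x (n - 1) with hx | hx
    · rw [toRP_rH P hx, toRP_gH P hx]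
      refine card_le_card (fun a ha => ?_)
      simp only [mem_filter, mem_range] at ha ⊢
      refine ⟨ha.1, ?_⟩
      have := s8_key hP ha.1
      omega
    · rw [s8_rH_oor _ hx, s8_gH_oor _ hx]

private lemma toPP_isPP {m n : ℕ} (hm : 1 ≤ m) (hn : 1 ≤ n) {Q : PolyBase (n - 1) (m - 1)}
    (hQ : IsRP (n - 1) (m - 1) Q) : IsPP m n (toPP m n Q) := by
  refine ⟨?_, ?_, toPP_gH0 Q hm, toPP_rH_top Q hm (le_refl _), ?_⟩
  · intro x y hxy
    rcases le_or_gt (m - 1) y with hy | hy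
    · rw [toPP_rH_top Q hm hy]
      rcases le_or_gt (m - 1) x with hx | hx
      · rw [toPP_rH_top Q hm hx]
      · rw [toPP_rH Q hn hx]
        have := (card_filter_le (range (n - 1))
          (fun c => gH (n - 1) (m - 1) Q c ≤ x)).trans_eq (card_range _)
        omega
    · have hx : x < m - 1 := by omega
      rw [toPP_rH Q hn hx, toPP_rH Q hn hy]
      have : ((range (n - 1)).filter fun c => gH (n - 1) (m - 1) Q c ≤ x).card
          ≤ ((range (n - 1)).filter fun c => gH (n - 1) (m - 1) Q c ≤ y).card := by
        refine card_le_card (fun a ha => ?_)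
        simp only [mem_filter, mem_range] at ha ⊢
        exact ⟨ha.1, ha.2.trans hxy⟩
      omega
  · intro x y hxy
    rcases Nat.eq_zero_or_pos x with rfl | hxpos
    · rw [toPP_gH0 Q hm]
      exact Nat.zero_le _
    · rcases lt_or_ge y m with hy | hy
      · rw [toPP_gH Q hxpos (by omega), toPP_gH Q (by omega) hy]
        refine card_le_card (fun a ha => ?_)
        simp only [mem_filter, mem_range] at ha ⊢
        exact ⟨ha.1, ha.2.trans (by omega)⟩
      · rw [s8_gH_oor _ hy]
        rcases lt_or_ge x m with hx | hx
        · rw [toPP_gH Q hxpos hx]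
          exact le_trans ((card_filter_le _ _).trans_eq (card_range _)) (by omega)
        · rw [s8_gH_oor _ hx]
  · intro x h1 h2
    have hm2 : 2 ≤ m := by omega
    rw [toPP_gH Q h1 (by omega), toPP_rH Q hn (by omega : x - 1 < m - 1)]
    have : ((range (n - 1)).filter fun c => rH (n - 1) (m - 1) Q c ≤ x - 1).card
        ≤ ((range (n - 1)).filter fun c => gH (n - 1) (m - 1) Q c ≤ x - 1).card := by
      refine card_le_card (fun a ha => ?_)
      simp only [mem_filter, mem_range] at ha ⊢
      exact ⟨ha.1, le_trans (hQ.2.2 a) ha.2⟩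
    omega

private lemma s8_left_rH {m n : ℕ} {P : PolyBase m n} (hm : 1 ≤ m) (hn : 1 ≤ n)
    (hP : IsPP m n P) (x : ℕ) : rH m n (toPP m n (toRP m n P)) x = rH m n P x := by
  rcases le_or_gt (m - 1) x with hx | hx
  · rw [toPP_rH_top _ hm hx]
    rcases lt_or_ge x m with hxm | hxm
    · have : x = m - 1 := by omega
      rw [this, hP.2.2.2.1]
    · rw [s8_rH_oor _ hxm]
  · rw [toPP_rH _ hn hx]
    have e1 : ((range (n - 1)).filter fun c => gH (n - 1) (m - 1) (toRP m n P) c ≤ x)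
        = (range (n - 1)).filter
            fun c => ((range (m - 1)).filter fun x' => rH m n P x' - 1 ≤ c).card ≤ x := by
      refine filter_congr (fun c hc => ?_)
      rw [toRP_gH P (mem_range.mp hc)]
      have e2 : (range (m - 1)).filter (fun x' => rH m n P x' ≤ c + 1)
          = (range (m - 1)).filter (fun x' => rH m n P x' - 1 ≤ c) := by
        refine filter_congr (fun x' _ => ?_)
        have := s8_rH_pos hn hP x'
        constructor <;> (intro; omega)
      rw [e2]
    rw [e1]
    have hbd : rH m n P x - 1 ≤ n - 1 := by
      have := s8_rH_le P x
      omega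
    rw [s8_lemT (fun a b hab => Nat.sub_le_sub_right (hP.1 a b hab) 1) hx hbd]
    have := s8_rH_pos hn hP x
    omega

private lemma s8_left_gH {m n : ℕ} {P : PolyBase m n} (hm : 1 ≤ m) (hn : 1 ≤ n)
    (hP : IsPP m n P) (x : ℕ) : gH m n (toPP m n (toRP m n P)) x = gH m n P x := by
  rcases Nat.eq_zero_or_pos x with rfl | hxpos
  · rw [toPP_gH0 _ hm, hP.2.2.1]
  · rcases lt_or_ge x m with hx | hx
    · rw [toPP_gH _ hxpos hx]
      have e1 : ((range (n - 1)).filter fun c => rH (n - 1) (m - 1) (toRP m n P) c ≤ x - 1)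
          = (range (n - 1)).filter
              fun c => ((range (m - 1)).filter fun x' => gH m n P (x' + 1) ≤ c).card ≤ x - 1 := by
        refine filter_congr (fun c hc => ?_)
        rw [toRP_rH P (mem_range.mp hc)]
      rw [e1]
      have hx1 : x - 1 < m - 1 := by omega
      have hbd : gH m n P (x - 1 + 1) ≤ n - 1 := by
        have := s8_gH_lt hn hP (show x - 1 + 1 < m by omega)
        omega
      rw [s8_lemT (fun a b hab => hP.2.1 (a + 1) (b + 1) (by omega)) hx1 hbd]
      congr 1
      omega
    · rw [s8_gH_oor _ hx, s8_gH_oor _ hx]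

private lemma s8_left {m n : ℕ} {P : PolyBase m n} (hm : 1 ≤ m) (hn : 1 ≤ n)
    (hP : IsPP m n P) : toPP m n (toRP m n P) = P := by
  refine Prod.ext ?_ ?_
  · funext x
    refine Fin.ext ?_
    have h := s8_left_rH hm hn hP (x : ℕ)
    rwa [s8_rH_fin, s8_rH_fin] at h
  · funext x
    refine Fin.ext ?_
    have h := s8_left_gH hm hn hP (x : ℕ)
    rwa [s8_gH_fin, s8_gH_fin] at h

private lemma s8_right {m n : ℕ} {Q : PolyBase (n - 1) (m - 1)} (hm : 1 ≤ m) (hn : 1 ≤ n)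
    (hQ : IsRP (n - 1) (m - 1) Q) : toRP m n (toPP m n Q) = Q := by
  refine Prod.ext ?_ ?_
  · funext c
    refine Fin.ext ?_
    rw [← s8_rH_fin (toRP m n (toPP m n Q)) c, ← s8_rH_fin Q c]
    have hc : (c : ℕ) < n - 1 := c.isLt
    rw [toRP_rH _ hc]
    have e1 : ((range (m - 1)).filter fun x => gH m n (toPP m n Q) (x + 1) ≤ (c : ℕ))
        = (range (m - 1)).filter
            fun x => ((range (n - 1)).filter fun c' => rH (n - 1) (m - 1) Q c' ≤ x).card ≤ (c : ℕ) := by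
      refine filter_congr (fun x hx => ?_)
      rw [toPP_gH Q (by omega) (by have := mem_range.mp hx; omega)]
      simp only [Nat.add_sub_cancel]
    rw [e1]
    have hbd : rH (n - 1) (m - 1) Q (c : ℕ) ≤ m - 1 := s8_rH_le Q (c : ℕ)
    rw [s8_lemT hQ.1 hc hbd]
  · funext c
    refine Fin.ext ?_
    rw [← s8_gH_fin (toRP m n (toPP m n Q)) c, ← s8_gH_fin Q c]
    have hc : (c : ℕ) < n - 1 := c.isLt
    rw [toRP_gH _ hc]
    have e1 : ((range (m - 1)).filter fun x => rH m n (toPP m n Q) x ≤ (c : ℕ) + 1)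
        = (range (m - 1)).filter
            fun x => ((range (n - 1)).filter fun c' => gH (n - 1) (m - 1) Q c' ≤ x).card ≤ (c : ℕ) := by
      refine filter_congr (fun x hx => ?_)
      rw [toPP_rH Q hn (mem_range.mp hx)]
      constructor <;> (intro; omega)
    rw [e1]
    have hbd : gH (n - 1) (m - 1) Q (c : ℕ) ≤ m - 1 := s8_gH_le Q (c : ℕ)
    rw [s8_lemT hQ.2.1 hc hbd]

private lemma ppSeq_succ_y {m n : ℕ} (P : PolyBase m n) (k : ℕ) :
    (ppSeq m n P (k + 1)).2 = rH m n P ((ppSeq m n P k).1 - 1) := rfl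

private lemma ppSeq_succ_c {m n : ℕ} (P : PolyBase m n) (k : ℕ) :
    (ppSeq m n P (k + 1)).1
      = ((range m).filter fun x => gH m n P x < rH m n P ((ppSeq m n P k).1 - 1)).card := rfl

private lemma rpSeq_succ_c {M N : ℕ} (Q : PolyBase M N) (k : ℕ) :
    (rpSeq M N Q (k + 1)).1
      = ((range M).filter fun x => gH M N Q x ≤ (rpSeq M N Q k).2).card := rfl

private lemma rpSeq_succ_y {M N : ℕ} (Q : PolyBase M N) (k : ℕ) :
    (rpSeq M N Q (k + 1)).2 = rH M N Q ((rpSeq M N Q (k + 1)).1) := rfl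

private lemma ppSeq_bounds {m n : ℕ} {P : PolyBase m n} (hm : 1 ≤ m) (hn : 1 ≤ n)
    (hP : IsPP m n P) (k : ℕ) :
    1 ≤ (ppSeq m n P k).1 ∧ (ppSeq m n P k).1 ≤ m ∧ (ppSeq m n P k).2 ≤ n := by
  induction k with
  | zero => exact ⟨le_refl 1, hm, Nat.zero_le n⟩
  | succ k ih =>
    refine ⟨?_, ?_, ?_⟩
    · rw [ppSeq_succ_c]
      have h0 : (0 : ℕ) ∈ (range m).filter
          fun x => gH m n P x < rH m n P ((ppSeq m n P k).1 - 1) := by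
        simp only [mem_filter, mem_range]
        refine ⟨by omega, ?_⟩
        rw [hP.2.2.1]
        exact s8_rH_pos hn hP _
      exact card_pos.mpr ⟨0, h0⟩
    · rw [ppSeq_succ_c]
      exact (card_filter_le _ _).trans_eq (card_range _)
    · rw [ppSeq_succ_y]
      exact s8_rH_le P _

private lemma ppSeq_y_pos {m n : ℕ} {P : PolyBase m n} (hn : 1 ≤ n)
    (hP : IsPP m n P) (k : ℕ) : 1 ≤ (ppSeq m n P (k + 1)).2 := by
  rw [ppSeq_succ_y]
  exact s8_rH_pos hn hP _

private lemma ppSeq_c_min {m n : ℕ} {P : PolyBase m n} (hm : 1 ≤ m) (hn : 1 ≤ n)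
    (hP : IsPP m n P) (k : ℕ) : min (k + 1) m ≤ (ppSeq m n P k).1 := by
  induction k with
  | zero => exact le_trans (min_le_left 1 m) (le_refl _)
  | succ k ih =>
    have hb := ppSeq_bounds hm hn hP k
    rcases lt_or_ge (ppSeq m n P k).1 m with hc | hc
    · have hkey : gH m n P (ppSeq m n P k).1 < rH m n P ((ppSeq m n P k).1 - 1) :=
        hP.2.2.2.2 (ppSeq m n P k).1 hb.1 (by omega)
      have hsub : range ((ppSeq m n P k).1 + 1) ⊆
          (range m).filter fun x => gH m n P x < rH m n P ((ppSeq m n P k).1 - 1) := by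
        intro a ha
        simp only [mem_range] at ha
        simp only [mem_filter, mem_range]
        exact ⟨by omega, lt_of_le_of_lt (hP.2.1 a _ (by omega)) hkey⟩
      have hcard := card_le_card hsub
      rw [card_range] at hcard
      rw [ppSeq_succ_c]
      omega
    · have hcm : (ppSeq m n P k).1 = m := le_antisymm hb.2.1 hc
      have hy : rH m n P ((ppSeq m n P k).1 - 1) = n := by
        rw [hcm]
        exact hP.2.2.2.1
      have hfull : (range m).filter
          (fun x => gH m n P x < rH m n P ((ppSeq m n P k).1 - 1)) = range m := by
        refine filter_true_of_mem (fun a ha => ?_)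
        rw [hy]
        exact s8_gH_lt hn hP (mem_range.mp ha)
      rw [ppSeq_succ_c, hfull, card_range]
      omega

private lemma ppSeq_c_full {m n : ℕ} {P : PolyBase m n} (hm : 1 ≤ m) (hn : 1 ≤ n)
    (hP : IsPP m n P) {k : ℕ} (hk : m - 1 ≤ k) : (ppSeq m n P k).1 = m := by
  have h1 := ppSeq_c_min hm hn hP k
  have h2 := (ppSeq_bounds hm hn hP k).2.1
  omega

private lemma ppSeq_y_full {m n : ℕ} {P : PolyBase m n} (hm : 1 ≤ m) (hn : 1 ≤ n)
    (hP : IsPP m n P) {k : ℕ} (hk : m ≤ k) : (ppSeq m n P k).2 = n := by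
  obtain ⟨k', rfl⟩ : ∃ k', k = k' + 1 := ⟨k - 1, by omega⟩
  rw [ppSeq_succ_y, ppSeq_c_full hm hn hP (show m - 1 ≤ k' by omega)]
  exact hP.2.2.2.1

private lemma s8_countB {m n : ℕ} {P : PolyBase m n} (hm : 1 ≤ m) (hn : 1 ≤ n)
    (hP : IsPP m n P) {t : ℕ} (ht : t < m) :
    ((range (n - 1)).filter fun c => gH (n - 1) (m - 1) (toRP m n P) c ≤ t).card
      = rH m n P t - 1 := by
  have e1 : ((range (n - 1)).filter fun c => gH (n - 1) (m - 1) (toRP m n P) c ≤ t)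
      = (range (n - 1)).filter
          fun c => ((range (m - 1)).filter fun x' => rH m n P x' - 1 ≤ c).card ≤ t := by
    refine filter_congr (fun c hc => ?_)
    rw [toRP_gH P (mem_range.mp hc)]
    have e2 : (range (m - 1)).filter (fun x' => rH m n P x' ≤ c + 1)
        = (range (m - 1)).filter (fun x' => rH m n P x' - 1 ≤ c) := by
      refine filter_congr (fun x' _ => ?_)
      have := s8_rH_pos hn hP x'
      constructor <;> (intro; omega)
    rw [e2]
  rw [e1]
  rcases lt_or_ge t (m - 1) with htm | htm
  · have hbd : rH m n P t - 1 ≤ n - 1 := by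
      have := s8_rH_le P t
      omega
    exact s8_lemT (fun a b hab => Nat.sub_le_sub_right (hP.1 a b hab) 1) htm hbd
  · have ht1 : t = m - 1 := by omega
    have hfull : (range (n - 1)).filter
        (fun c => ((range (m - 1)).filter fun x' => rH m n P x' - 1 ≤ c).card ≤ t) = range (n - 1) := by
      refine filter_true_of_mem (fun c _ => ?_)
      have := (card_filter_le (range (m - 1)) (fun x' => rH m n P x' - 1 ≤ c)).trans_eq
        (card_range _)
      omega
    rw [hfull, card_range, ht1, hP.2.2.2.1]

private lemma s8_countC {m n : ℕ} {P : PolyBase m n} (hm : 1 ≤ m) (hn : 1 ≤ n)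
    (hP : IsPP m n P) {y : ℕ} (h1 : 1 ≤ y) (h2 : y ≤ n) :
    rH (n - 1) (m - 1) (toRP m n P) (y - 1)
      = ((range m).filter fun x => gH m n P x < y).card - 1 := by
  rcases lt_or_ge y n with hy | hy
  · rw [toRP_rH P (show y - 1 < n - 1 by omega)]
    have e1 : (range (m - 1)).filter (fun x => gH m n P (x + 1) ≤ y - 1)
        = (range (m - 1)).filter (fun x => gH m n P (x + 1) < y) := by
      refine filter_congr (fun x _ => ?_)
      constructor <;> (intro; omega)
    rw [e1]
    have e2 : ((range m).filter fun x => gH m n P x < y).card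
        = ((range (m - 1)).filter fun x => gH m n P (x + 1) < y).card + 1 :=
      s8_count_shift m hm (fun x => gH m n P x < y)
        (show gH m n P 0 < y by rw [hP.2.2.1]; omega)
    omega
  · have hyn : y = n := by omega
    rw [s8_rH_oor _ (show n - 1 ≤ y - 1 by omega)]
    have hfull : (range m).filter (fun x => gH m n P x < y) = range m := by
      refine filter_true_of_mem (fun a ha => ?_)
      rw [hyn]
      exact s8_gH_lt hn hP (mem_range.mp ha)
    rw [hfull, card_range]

private lemma s8_seq {m n : ℕ} {P : PolyBase m n} (hm : 1 ≤ m) (hn : 1 ≤ n)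
    (hP : IsPP m n P) (k : ℕ) :
    (rpSeq (n - 1) (m - 1) (toRP m n P) k).1 = (ppSeq m n P k).2 - 1 ∧
    (rpSeq (n - 1) (m - 1) (toRP m n P) k).2 = (ppSeq m n P k).1 - 1 := by
  induction k with
  | zero => exact ⟨rfl, rfl⟩
  | succ k ih =>
    have hb := ppSeq_bounds hm hn hP k
    have hA : (rpSeq (n - 1) (m - 1) (toRP m n P) (k + 1)).1 = (ppSeq m n P (k + 1)).2 - 1 := by
      rw [rpSeq_succ_c, ih.2, s8_countB hm hn hP (show (ppSeq m n P k).1 - 1 < m by omega),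
        ppSeq_succ_y]
    refine ⟨hA, ?_⟩
    rw [rpSeq_succ_y, hA]
    have hy1 : 1 ≤ (ppSeq m n P (k + 1)).2 := ppSeq_y_pos hn hP k
    have hy2 : (ppSeq m n P (k + 1)).2 ≤ n := (ppSeq_bounds hm hn hP (k + 1)).2.2
    rw [s8_countC hm hn hP hy1 hy2, ppSeq_succ_c, ppSeq_succ_y]

private lemma s8_range_decomp (hm : 1 ≤ m) (hn : 1 ≤ n) :
    range (m + n + 1) = insert 0 (insert (m + n) (Finset.Icc 1 (m + n - 1))) := by
  ext a
  simp only [mem_range, mem_insert, Finset.mem_Icc]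
  omega

private lemma s8_ppVval_one {m n : ℕ} {P : PolyBase m n} (hm : 1 ≤ m) (hn : 1 ≤ n)
    (hP : IsPP m n P) : ppVval m n P 1 = 1 := by
  unfold ppVval
  have e : (range (m + n + 1)).filter (fun k => (ppSeq m n P k).2 < 1) = {0} := by
    ext k
    simp only [mem_filter, mem_range, mem_singleton]
    constructor
    · rintro ⟨hk, hlt⟩
      by_contra h0
      obtain ⟨k', rfl⟩ : ∃ k', k = k' + 1 := ⟨k - 1, by omega⟩
      have := ppSeq_y_pos hn hP k'
      omega
    · rintro rfl
      have h0 : (ppSeq m n P 0).2 = 0 := rfl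
      exact ⟨by omega, by omega⟩
  rw [e, card_singleton]

private lemma s8_ppBval_zero {m n : ℕ} {P : PolyBase m n} (hm : 1 ≤ m) (hn : 1 ≤ n)
    (hP : IsPP m n P) : ppBval m n P 0 = 0 := by
  unfold ppBval
  refine card_eq_zero.mpr (filter_eq_empty_iff.mpr (fun k _ => ?_))
  have := (ppSeq_bounds hm hn hP k).1
  omega

private lemma s8_ppVval {m n : ℕ} {P : PolyBase m n} (hm : 1 ≤ m) (hn : 1 ≤ n)
    (hP : IsPP m n P) {y : ℕ} (h2 : 2 ≤ y) (hyn : y ≤ n) :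
    ppVval m n P y = rpHval (n - 1) (m - 1) (toRP m n P) (y - 2) + 1 := by
  unfold ppVval rpHval
  rw [s8_range_decomp hm hn]
  rw [filter_insert, if_pos (show (ppSeq m n P 0).2 < y from by
    have h0 : (ppSeq m n P 0).2 = 0 := rfl
    omega)]
  rw [filter_insert, if_neg (show ¬ (ppSeq m n P (m + n)).2 < y from by
    rw [ppSeq_y_full hm hn hP (show m ≤ m + n by omega)]
    omega)]
  rw [card_insert_of_notMem (by
    simp only [mem_filter, Finset.mem_Icc]
    omega)]
  have hIcc : Finset.Icc 1 ((n - 1) + (m - 1) + 1) = Finset.Icc 1 (m + n - 1) := by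
    congr 1
    omega
  rw [hIcc]
  congr 1
  refine congrArg card (filter_congr (fun k hk => ?_))
  rw [Finset.mem_Icc] at hk
  obtain ⟨k', rfl⟩ : ∃ k', k = k' + 1 := ⟨k - 1, by omega⟩
  have hs := (s8_seq hm hn hP (k' + 1)).1
  have hy1 := ppSeq_y_pos hn hP k'
  rw [hs]
  constructor <;> (intro; omega)

private lemma s8_ppBval {m n : ℕ} {P : PolyBase m n} (hm : 1 ≤ m) (hn : 1 ≤ n)
    (hP : IsPP m n P) {x : ℕ} (h1 : 1 ≤ x) (hx : x ≤ m - 1) :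
    ppBval m n P x = rpVval (n - 1) (m - 1) (toRP m n P) x + 1 := by
  unfold ppBval rpVval
  rw [s8_range_decomp hm hn]
  rw [filter_insert, if_pos (show (ppSeq m n P 0).1 ≤ x from by
    have h0 : (ppSeq m n P 0).1 = 1 := rfl
    omega)]
  rw [filter_insert, if_neg (show ¬ (ppSeq m n P (m + n)).1 ≤ x from by
    rw [ppSeq_c_full hm hn hP (show m - 1 ≤ m + n by omega)]
    omega)]
  rw [card_insert_of_notMem (by
    simp only [mem_filter, Finset.mem_Icc]
    omega)]
  have hIcc : Finset.Icc 1 ((n - 1) + (m - 1) + 1) = Finset.Icc 1 (m + n - 1) := by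
    congr 1
    omega
  rw [hIcc]
  congr 1
  refine congrArg card (filter_congr (fun k hk => ?_))
  rw [Finset.mem_Icc] at hk
  obtain ⟨k', rfl⟩ : ∃ k', k = k' + 1 := ⟨k - 1, by omega⟩
  have hs := (s8_seq hm hn hP (k' + 1)).2
  have hc1 := (ppSeq_bounds hm hn hP (k' + 1)).1
  rw [hs]
  constructor <;> (intro; omega)

private lemma s8_bounce {m n : ℕ} {P : PolyBase m n} (hm : 1 ≤ m) (hn : 1 ≤ n)
    (hP : IsPP m n P) :
    ppBounce m n P = rpBounce (n - 1) (m - 1) (toRP m n P) + (m + n - 1) := by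
  unfold ppBounce rpBounce
  have hIccn : Finset.Icc 1 n = insert 1 (Finset.Icc 2 n) := by
    ext a
    simp only [mem_insert, Finset.mem_Icc]
    omega
  have hrm : range m = insert 0 (Finset.Icc 1 (m - 1)) := by
    ext a
    simp only [mem_insert, Finset.mem_Icc, mem_range]
    omega
  rw [hIccn, hrm, sum_insert (by simp), sum_insert (by simp)]
  rw [s8_ppVval_one hm hn hP, s8_ppBval_zero hm hn hP]
  have e1 : ∑ y ∈ Finset.Icc 2 n, ppVval m n P y
      = ∑ y ∈ Finset.Icc 2 n, (rpHval (n - 1) (m - 1) (toRP m n P) (y - 2) + 1) :=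
    sum_congr rfl (fun y hy => by
      rw [Finset.mem_Icc] at hy
      exact s8_ppVval hm hn hP hy.1 hy.2)
  have e2 : ∑ x ∈ Finset.Icc 1 (m - 1), ppBval m n P x
      = ∑ x ∈ Finset.Icc 1 (m - 1), (rpVval (n - 1) (m - 1) (toRP m n P) x + 1) :=
    sum_congr rfl (fun x hx => by
      rw [Finset.mem_Icc] at hx
      exact s8_ppBval hm hn hP hx.1 hx.2)
  rw [e1, e2, sum_add_distrib, sum_add_distrib, sum_const, sum_const]
  have hcard1 : (Finset.Icc 2 n).card = n - 1 := by
    rw [Nat.card_Icc]; omega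
  have hcard2 : (Finset.Icc 1 (m - 1)).card = m - 1 := by
    rw [Nat.card_Icc]; omega
  have e3 : ∑ y ∈ Finset.Icc 2 n, rpHval (n - 1) (m - 1) (toRP m n P) (y - 2)
      = ∑ x ∈ range (n - 1), rpHval (n - 1) (m - 1) (toRP m n P) x := by
    rw [show Finset.Icc 2 n = (range (n - 1)).image (· + 2) from by
      ext a
      simp only [Finset.mem_Icc, mem_image, mem_range]
      constructor
      · intro h
        exact ⟨a - 2, by omega, by omega⟩
      · rintro ⟨b, hb, rfl⟩
        omega]
    rw [sum_image (fun a _ b _ hab => by omega)]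
    exact sum_congr rfl (fun x _ => by congr 1)
  rw [e3, hcard1, hcard2]
  simp only [smul_eq_mul, mul_one]
  omega

private lemma s8_area {m n : ℕ} {P : PolyBase m n} (hm : 1 ≤ m) (hn : 1 ≤ n)
    (hP : IsPP m n P) :
    polyArea m n P = polyArea (n - 1) (m - 1) (toRP m n P) + (m + n - 1) := by
  have hQRP := toRP_isRP hm hn hP
  have hPZ : (polyArea m n P : ℤ) = ∑ x ∈ range m, ((rH m n P x : ℤ) - gH m n P x) := by
    unfold polyArea
    rw [Nat.cast_sum]
    exact sum_congr rfl (fun x _ => Nat.cast_sub (s8_gH_le_rH hP x))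
  have hQZ : (polyArea (n - 1) (m - 1) (toRP m n P) : ℤ)
      = ∑ c ∈ range (n - 1), ((rH (n - 1) (m - 1) (toRP m n P) c : ℤ)
          - gH (n - 1) (m - 1) (toRP m n P) c) := by
    unfold polyArea
    rw [Nat.cast_sum]
    exact sum_congr rfl (fun c _ => Nat.cast_sub (hQRP.2.2 c))
  have hcol : ∀ c ∈ range (n - 1),
      ((rH (n - 1) (m - 1) (toRP m n P) c : ℤ) - gH (n - 1) (m - 1) (toRP m n P) c)
      = ∑ x ∈ range (m - 1), ((if gH m n P (x + 1) ≤ c then (1 : ℤ) else 0)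
          - if rH m n P x ≤ c + 1 then (1 : ℤ) else 0) := by
    intro c hc
    rw [toRP_rH P (mem_range.mp hc), toRP_gH P (mem_range.mp hc), sum_sub_distrib]
    rw [card_filter, card_filter, Nat.cast_sum, Nat.cast_sum]
    congr 1 <;> exact sum_congr rfl (fun x _ => by split <;> simp)
  have hinner : ∀ x ∈ range (m - 1),
      ∑ c ∈ range (n - 1), ((if gH m n P (x + 1) ≤ c then (1 : ℤ) else 0)
          - if rH m n P x ≤ c + 1 then (1 : ℤ) else 0)
      = ((rH m n P x : ℤ) - 1 - gH m n P (x + 1)) := by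
    intro x hx
    rw [mem_range] at hx
    rw [sum_sub_distrib]
    have hg : ∑ c ∈ range (n - 1), (if gH m n P (x + 1) ≤ c then (1 : ℤ) else 0)
        = ((n - 1 : ℕ) : ℤ) - (gH m n P (x + 1) : ℤ) := by
      have hgle : gH m n P (x + 1) ≤ n - 1 := by
        have := s8_gH_lt hn hP (show x + 1 < m by omega)
        omega
      have h1 : ∑ c ∈ range (n - 1), (if gH m n P (x + 1) ≤ c then (1 : ℤ) else 0)
          = (((range (n - 1)).filter fun c => gH m n P (x + 1) ≤ c).card : ℤ) := by
        rw [card_filter, Nat.cast_sum]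
        exact sum_congr rfl (fun c _ => by split <;> simp)
      rw [h1, s8_filter_range_ge (n - 1) _ hgle, Nat.cast_sub hgle]
    have hr : ∑ c ∈ range (n - 1), (if rH m n P x ≤ c + 1 then (1 : ℤ) else 0)
        = ((n - 1 : ℕ) : ℤ) - ((rH m n P x : ℤ) - 1) := by
      have hrpos := s8_rH_pos hn hP x
      have hrle : rH m n P x - 1 ≤ n - 1 := by
        have := s8_rH_le P x
        omega
      have e0 : ∑ c ∈ range (n - 1), (if rH m n P x ≤ c + 1 then (1 : ℤ) else 0)
          = ∑ c ∈ range (n - 1), (if rH m n P x - 1 ≤ c then (1 : ℤ) else 0) :=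
        sum_congr rfl (fun c _ => by
          split_ifs <;> omega)
      have h1 : ∑ c ∈ range (n - 1), (if rH m n P x - 1 ≤ c then (1 : ℤ) else 0)
          = (((range (n - 1)).filter fun c => rH m n P x - 1 ≤ c).card : ℤ) := by
        rw [card_filter, Nat.cast_sum]
        exact sum_congr rfl (fun c _ => by split <;> simp)
      rw [e0, h1, s8_filter_range_ge (n - 1) _ hrle, Nat.cast_sub hrle,
        Nat.cast_sub hrpos, Nat.cast_one]
    rw [hg, hr]
    ring
  have hQZ2 : (polyArea (n - 1) (m - 1) (toRP m n P) : ℤ)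
      = ∑ x ∈ range (m - 1), ((rH m n P x : ℤ) - 1 - gH m n P (x + 1)) := by
    rw [hQZ, sum_congr rfl hcol, sum_comm]
    exact sum_congr rfl hinner
  have hrm : range m = insert (m - 1) (range (m - 1)) := by
    ext a
    simp only [mem_insert, mem_range]
    omega
  have htel : ∑ x ∈ range (m - 1), ((gH m n P (x + 1) : ℤ) - gH m n P x)
      = (gH m n P (m - 1) : ℤ) - gH m n P 0 :=
    Finset.sum_range_sub (fun i => (gH m n P i : ℤ)) (m - 1)
  have key : (polyArea m n P : ℤ)
      = (polyArea (n - 1) (m - 1) (toRP m n P) : ℤ) + ((m + n - 1 : ℕ) : ℤ) := by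
    rw [hPZ, hQZ2, hrm, sum_insert (by simp), hP.2.2.2.1]
    have expand : ∀ x ∈ range (m - 1), ((rH m n P x : ℤ) - gH m n P x)
        = ((rH m n P x : ℤ) - 1 - gH m n P (x + 1))
          + (((gH m n P (x + 1) : ℤ) - gH m n P x) + 1) := fun x _ => by ring
    rw [sum_congr rfl expand, sum_add_distrib, sum_add_distrib, htel, sum_const, hP.2.2.1]
    have hgle : (gH m n P (m - 1) : ℤ) ≤ (n : ℤ) := by
      exact_mod_cast s8_gH_le P (m - 1)
    have hc1 : ((m + n - 1 : ℕ) : ℤ) = (m : ℤ) + n - 1 := by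
      have : 1 ≤ m + n := by omega
      push_cast [Nat.cast_sub this]
      ring
    have hc2 : ((m - 1 : ℕ) : ℤ) = (m : ℤ) - 1 := by
      push_cast [Nat.cast_sub hm]
      ring
    rw [hc1]
    simp only [card_range, nsmul_eq_mul, mul_one, Nat.cast_zero, hc2]
    ring
  exact_mod_cast key

end Statement8Aux


/-- there is a bijection `r : PP(m,n) → RP(n-1, m-1)` such that
`area(P) = area(r P) + (m+n-1)` and `bounce(P) = bounce(r P) + (m+n-1)`. -/
theorem statement8 (m n : ℕ) (hm : 1 ≤ m) (hn : 1 ≤ n) :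
    ∃ r : {P : PolyBase m n // IsPP m n P} ≃
        {P : PolyBase (n - 1) (m - 1) // IsRP (n - 1) (m - 1) P},
      ∀ P : {P : PolyBase m n // IsPP m n P},
        polyArea m n P.1 = polyArea (n - 1) (m - 1) (r P).1 + (m + n - 1) ∧
        ppBounce m n P.1 = rpBounce (n - 1) (m - 1) (r P).1 + (m + n - 1) := by
  refine ⟨⟨fun P => ⟨toRP m n P.1, toRP_isRP hm hn P.2⟩,
    fun Q => ⟨toPP m n Q.1, toPP_isPP hm hn Q.2⟩, ?_, ?_⟩, ?_⟩
  · intro P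
    exact Subtype.ext (s8_left hm hn P.2)
  · intro Q
    exact Subtype.ext (s8_right hm hn Q.2)
  · intro P
    exact ⟨s8_area hm hn P.2, s8_bounce hm hn P.2⟩

end DeltaConj

end
end

section
/- Let P be a reduced polyomino in RP(m,n) with area word 0 a_1…a_{m+n}, and let φ(P) be the two car parking function of size m+n whose area word is |a_1|…|a_{m+n}| and whose i-th label is 1 if a_i is barred and 2 if a_i is unbarred. Then bounce(P) = pmaj(φ(P)). -/
open Finset

attribute [local instance 0] Classical.propDecidable

noncomputable section

namespace DeltaConj

/-! Row `i` of `φ(P)` comes from a step `c` of one of the two paths of `P` and lies in column `c`: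
a red north step gives a label `1`, a green east step a label `2`. So when the parking algorithm
reaches column `j`, the labels still available are those of the red north steps and green east
steps among the first `j + 1` steps, less the ones already used. With only two letters it keeps
choosing `2` while a `2` is available and `1` while a `1` is available, which is the rule of the
bounce path: east while the green path has already turned east, north while the red path has not.
Hence the parking word is the bounce path with `2` for east and `1` for north. Its ascents are the
north-to-east corners of the bounce path, and the major index of the reversed word weights each by
the number of steps after it, which is how the bounce labels add up. -/

theorem lt_card_filter_range_iff {p : ℕ → Prop} [DecidablePred p]
    (hp : ∀ x y, x ≤ y → p y → p x) {m x : ℕ} (hx : x < m) :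
    x < ((range m).filter p).card ↔ p x := by
  constructor
  · intro hlt
    by_contra hpx
    have hsub : (range m).filter p ⊆ range x := fun z hz => by
      rw [mem_filter, mem_range] at hz
      exact mem_range.2 (lt_of_not_ge fun hxz => hpx (hp x z hxz hz.2))
    simpa using (card_le_card hsub).trans_lt' hlt
  · intro hpx
    have hsub : range (x + 1) ⊆ (range m).filter p := fun z hz => by
      rw [mem_range] at hz
      exact mem_filter.2 ⟨mem_range.2 (by omega), hp z x (by omega) hpx⟩
    simpa using card_le_card hsub

/-- The east step in column `x` of a lattice path whose east steps lie at heights `f x` is its step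
number `f x + x`, so `eastCount m f t` counts the east steps among its first `t` steps. -/
def eastCount (m : ℕ) (f : ℕ → ℕ) (t : ℕ) : ℕ :=
  ((range m).filter fun x => f x + x < t).card

section eastCount

variable {m t : ℕ} {f g : ℕ → ℕ}

theorem lt_eastCount_iff (hf : Monotone f) {x : ℕ} (hx : x < m) :
    x < eastCount m f t ↔ f x + x < t :=
  lt_card_filter_range_iff (fun a b hab hb => by have := hf hab; omega) hx

theorem eastCount_zero : eastCount m f 0 = 0 := by
  simp [eastCount]

theorem eastCount_le : eastCount m f t ≤ m :=
  (card_filter_le _ _).trans_eq (card_range m)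

theorem eastCount_succ_of_not (ht : ¬ ∃ x, x < m ∧ t = f x + x) :
    eastCount m f (t + 1) = eastCount m f t :=
  congrArg card <| filter_congr fun x hx => by
    have : f x + x ≠ t := fun h => ht ⟨x, mem_range.1 hx, h.symm⟩
    omega

theorem eastCount_succ_of_exists (hf : Monotone f) (ht : ∃ x, x < m ∧ t = f x + x) :
    eastCount m f (t + 1) = eastCount m f t + 1 := by
  obtain ⟨x, hx, rfl⟩ := ht
  have hinj : Function.Injective fun y => f y + y := (hf.add_strictMono strictMono_id).injective
  have hsplit : ((range m).filter fun y => f y + y < f x + x + 1) =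
      insert x ((range m).filter fun y => f y + y < f x + x) := by
    ext y
    simp only [mem_insert, mem_filter, mem_range]
    constructor
    · intro hy
      by_cases hyx : f y + y = f x + x
      · exact Or.inl (hinj hyx)
      · exact Or.inr ⟨hy.1, by omega⟩
    · rintro (rfl | hy)
      · exact ⟨hx, by omega⟩
      · exact ⟨hy.1, by omega⟩
  rw [eastCount, hsplit, card_insert_of_notMem (by simp), eastCount]

theorem eastCount_anti (hgf : ∀ x, g x ≤ f x) :
    eastCount m f t ≤ eastCount m g t :=
  card_le_card fun x hx => by
    rw [mem_filter] at hx ⊢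
    exact ⟨hx.1, (Nat.add_le_add_right (hgf x) x).trans_lt hx.2⟩

theorem eastCount_succ_le (hgf : ∀ x, g x ≤ f x) (ht : ¬ ∃ x, x < m ∧ t = g x + x) :
    eastCount m f (t + 1) ≤ eastCount m g t :=
  card_le_card fun x hx => by
    rw [mem_filter, mem_range] at hx ⊢
    have := hgf x
    exact ⟨hx.1, lt_of_le_of_ne (by omega) fun h => ht ⟨x, hx.1, h.symm⟩⟩

theorem eastCount_eq_of_le {n : ℕ} (hf : ∀ x, f x ≤ n) (ht : m + n ≤ t) :
    eastCount m f t = m := by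
  rw [eastCount, filter_true_of_mem fun x hx => by have := hf x; rw [mem_range] at hx; omega,
    card_range]

end eastCount

/-! ### The parking algorithm -/

def parkChoice (C : Multiset ℕ) (p : ℕ) : ℕ :=
  if C.filter (fun x => x ≤ p) = 0 then C.sup else (C.filter fun x => x ≤ p).sup

section Parking

variable {N : ℕ} {w l : ℕ → ℕ}

theorem ldPAux_succ_fst (j : ℕ) : (ldPAux N w l (j + 1)).1 =
    (ldPAux N w l j).1.erase (ldPword N w l j) + ldColLab N w l (j + 1) := rfl

theorem ldPword_succ (j : ℕ) :
    ldPword N w l (j + 1) = parkChoice (ldPAux N w l (j + 1)).1 (ldPword N w l j) := rfl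

theorem count_ldColLab (a c : ℕ) :
    (ldColLab N w l c).count a = ((range N).filter fun i => i - w i = c ∧ l i = a).card := by
  rw [ldColLab, Multiset.count_map, ← filter_val, filter_filter]
  simp only [eq_comm (a := a)]
  rfl

theorem mem_ldPAux_fst {j x : ℕ} (hx : x ∈ (ldPAux N w l j).1) : ∃ i, x = l i := by
  have hcol : ∀ {c}, x ∈ ldColLab N w l c → ∃ i, x = l i := fun h => by
    obtain ⟨i, -, rfl⟩ := Multiset.mem_map.1 h
    exact ⟨i, rfl⟩
  induction j with
  | zero => exact hcol hx
  | succ j ih =>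
    rcases Multiset.mem_add.1 (ldPAux_succ_fst (w := w) (l := l) j ▸ hx) with h | h
    · exact ih (Multiset.mem_of_mem_erase h)
    · exact hcol h

theorem multiset_sup_eq_zero_or_mem (s : Multiset ℕ) : s.sup = 0 ∨ s.sup ∈ s := by
  induction s using Multiset.induction_on with
  | empty => simp
  | cons a s ih =>
    rw [Multiset.sup_cons]
    exact sup_ind (p := fun x => x = 0 ∨ x ∈ a ::ₘ s) a s.sup
      (Or.inr (Multiset.mem_cons_self a s)) (ih.imp_right Multiset.mem_cons_of_mem)

theorem ldPword_mem_ldPAux {j : ℕ} (hj : ldPword N w l j ≠ 0) :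
    ldPword N w l j ∈ (ldPAux N w l j).1 := by
  cases j with
  | zero => exact (multiset_sup_eq_zero_or_mem _).resolve_left hj
  | succ j =>
    rw [ldPword_succ] at hj ⊢
    unfold parkChoice at hj ⊢
    split_ifs at hj ⊢
    · exact (multiset_sup_eq_zero_or_mem _).resolve_left hj
    · exact Multiset.mem_of_mem_filter ((multiset_sup_eq_zero_or_mem _).resolve_left hj)

theorem ldPmaj_eq_sum_ascents : ldPmaj N w l =
    ∑ i ∈ (range (N - 1)).filter (fun i => ldPword N w l i < ldPword N w l (i + 1)),
      (N - 1 - i) := by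
  rw [ldPmaj, sum_filter]

end Parking

section TwoLetters

variable {C : Multiset ℕ} {p : ℕ}

theorem parkChoice_eq_two (hC : ∀ x ∈ C, x = 1 ∨ x = 2) (h2 : 2 ∈ C)
    (hp : p = 2 ∨ 1 ∉ C) :
    parkChoice C p = 2 := by
  have hle : ∀ D ≤ C, D.sup ≤ 2 := fun D hD => Multiset.sup_le.2 fun x hx => by
    rcases hC x (Multiset.mem_of_le hD hx) with h | h <;> omega
  unfold parkChoice
  split_ifs with hF
  · exact le_antisymm (hle C le_rfl) (Multiset.le_sup h2)
  · refine le_antisymm (hle _ (Multiset.filter_le _ _)) ?_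
    rcases hp with rfl | h1
    · exact Multiset.le_sup (Multiset.mem_filter.2 ⟨h2, le_rfl⟩)
    · obtain ⟨x, hx⟩ := Multiset.exists_mem_of_ne_zero hF
      have hxC := Multiset.mem_of_mem_filter hx
      rcases hC x hxC with rfl | rfl
      · exact absurd hxC h1
      · exact Multiset.le_sup hx

theorem parkChoice_eq_one (hC : ∀ x ∈ C, x = 1 ∨ x = 2) (h1 : 1 ∈ C)
    (hp : p = 1 ∨ 2 ∉ C) :
    parkChoice C p = 1 := by
  unfold parkChoice
  split_ifs with hF
  · have h2 : 2 ∉ C := hp.resolve_left fun hp1 => by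
      have h1F : 1 ∈ C.filter fun x => x ≤ p := Multiset.mem_filter.2 ⟨h1, hp1.ge⟩
      rw [hF] at h1F
      exact Multiset.notMem_zero 1 h1F
    refine le_antisymm (Multiset.sup_le.2 fun x hx => ?_) (Multiset.le_sup h1)
    rcases hC x hx with rfl | rfl
    · exact le_rfl
    · exact absurd hx h2
  · have hF1 : ∀ x ∈ C.filter (fun x => x ≤ p), x = 1 := fun x hx => by
      obtain ⟨hxC, hxp⟩ := Multiset.mem_filter.1 hx
      rcases hC x hxC with h | rfl
      · exact h
      · rcases hp with rfl | h2
        · omega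
        · exact absurd hxC h2
    obtain ⟨x, hx⟩ := Multiset.exists_mem_of_ne_zero hF
    refine le_antisymm (Multiset.sup_le.2 fun y hy => (hF1 y hy).le) ?_
    rw [← hF1 x hx]
    exact Multiset.le_sup hx

end TwoLetters

section Polyomino

variable {m n : ℕ} {P : PolyBase m n}

theorem rH_le (x : ℕ) : rH m n P x ≤ n := by
  unfold rH; split
  · exact Nat.lt_succ_iff.1 (Fin.is_lt _)
  · exact le_rfl

theorem gH_le (x : ℕ) : gH m n P x ≤ n := by
  unfold gH; split
  · exact Nat.lt_succ_iff.1 (Fin.is_lt _)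
  · exact le_rfl

theorem rH_of_le {x : ℕ} (hx : m ≤ x) : rH m n P x = n := by
  unfold rH; rw [dif_neg (by omega)]

theorem IsRP.rH_mono (hP : IsRP m n P) : Monotone (rH m n P) := fun x y h => hP.1 x y h

theorem IsRP.gH_mono (hP : IsRP m n P) : Monotone (gH m n P) := fun x y h => hP.2.1 x y h

theorem IsRP.eastCount_rH_le_eastCount_gH (hP : IsRP m n P) (t : ℕ) :
    eastCount m (rH m n P) t ≤ eastCount m (gH m n P) t :=
  eastCount_anti hP.2.2

/-! ### The Dyck path of `P` -/

theorem rpW_zero : rpW m n P 0 := by simp [rpW]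

theorem rpW_odd {c : ℕ} (hc : c < m + n) : rpW m n P (2 * c + 1) ↔ ¬ polyRedE m n P c := by
  unfold rpW
  rw [if_neg (by omega), if_pos (by omega), if_pos (by omega),
    show (2 * c + 1 - 1) / 2 = c by omega]

theorem rpW_even {c : ℕ} (hc : c < m + n) : rpW m n P (2 * c + 2) ↔ polyGreenE m n P c := by
  unfold rpW
  rw [if_neg (by omega), if_pos (by omega), if_neg (by omega),
    show (2 * c + 2) / 2 - 1 = c by omega]

theorem rpW_infinite : (Set.ofPred (rpW m n P)).Infinite :=
  (Set.Ici_infinite (2 * (m + n) + 2)).mono fun k (hk : 2 * (m + n) + 2 ≤ k) => by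
    show rpW m n P k
    unfold rpW
    rw [if_neg (by omega), if_neg (by omega), if_neg (by omega)]
    trivial

/-- Up to the red step `c`, the Dyck path has one north step for the prepended step, one for each
red north step and one for each green east step. -/
theorem count_rpW_odd (hP : IsRP m n P) {c : ℕ} (hc : c ≤ m + n) :
    Nat.count (rpW m n P) (2 * c + 1) + eastCount m (rH m n P) c =
      1 + c + eastCount m (gH m n P) c := by
  induction c with
  | zero => simp [Nat.count_succ, rpW_zero, eastCount_zero]
  | succ c ih =>
    have hc' : c < m + n := by omega
    rw [show 2 * (c + 1) + 1 = 2 * c + 1 + 1 + 1 by ring, Nat.count_succ, Nat.count_succ,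
      show 2 * c + 1 + 1 = 2 * c + 2 by ring]
    by_cases hr : polyRedE m n P c <;> by_cases hg : polyGreenE m n P c
    all_goals
      simp only [hr, hg, rpW_odd hc', rpW_even hc', not_true, not_false_iff, if_true, if_false]
    · rw [eastCount_succ_of_exists hP.rH_mono hr, eastCount_succ_of_exists hP.gH_mono hg]; omega
    · rw [eastCount_succ_of_exists hP.rH_mono hr, eastCount_succ_of_not hg]; omega
    · rw [eastCount_succ_of_not hr, eastCount_succ_of_exists hP.gH_mono hg]; omega
    · rw [eastCount_succ_of_not hr, eastCount_succ_of_not hg]; omega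

theorem count_rpW_top (hP : IsRP m n P) : Nat.count (rpW m n P) (2 * (m + n) + 1) = m + n + 1 := by
  have h := count_rpW_odd hP le_rfl
  rw [eastCount_eq_of_le rH_le le_rfl, eastCount_eq_of_le gH_le le_rfl] at h
  omega

/-- The Dyck path of `P` is strictly above the diagonal before each east step, so the truncated
subtraction in `rpHt` never bites. -/
theorem lt_two_mul_count_rpW (hP : IsRP m n P) {k : ℕ} (hk : k ≤ 2 * (m + n) + 1)
    (hw : ¬ rpW m n P k) : k < 2 * Nat.count (rpW m n P) k := by
  obtain ⟨c, rfl | rfl⟩ := Nat.even_or_odd' k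
  · obtain ⟨c, rfl⟩ : ∃ c', c = c' + 1 := by
      rcases c with _ | c
      · exact absurd rpW_zero hw
      · exact ⟨c, rfl⟩
    have hc : c < m + n := by omega
    have hg : ¬ polyGreenE m n P c :=
      (rpW_even hc).not.1 (by rwa [show 2 * (c + 1) = 2 * c + 2 by ring] at hw)
    have hodd := count_rpW_odd hP hc.le
    have hle := eastCount_succ_le (m := m) hP.2.2 hg
    rw [show 2 * (c + 1) = 2 * c + 1 + 1 by ring, Nat.count_succ]
    by_cases hr : polyRedE m n P c
    · rw [eastCount_succ_of_exists hP.rH_mono hr] at hle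
      simp only [(rpW_odd hc).not.2 (not_not.2 hr), if_false]
      omega
    · rw [eastCount_succ_of_not hr] at hle
      simp only [(rpW_odd hc).2 hr, if_true]
      omega
  · have hodd := count_rpW_odd hP (show c ≤ m + n by omega)
    have := hP.eastCount_rH_le_eastCount_gH c
    omega

theorem rpHt_add (hP : IsRP m n P) {k : ℕ} (hk : k ≤ 2 * (m + n) + 2) :
    rpHt m n P k + k = 2 * Nat.count (rpW m n P) k := by
  induction k with
  | zero => simp [rpHt]
  | succ k ih =>
    have ih := ih (by omega)
    rw [rpHt, Nat.count_succ]
    by_cases hw : rpW m n P k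
    · simp only [hw, if_true]; omega
    · have := lt_two_mul_count_rpW hP (by omega) hw
      simp only [hw, if_false]; omega

theorem nth_rpW_succ (hP : IsRP m n P) {i : ℕ} (hi : i < m + n) :
    1 ≤ Nat.nth (rpW m n P) (i + 1) ∧ Nat.nth (rpW m n P) (i + 1) ≤ 2 * (m + n) ∧
      rpRank m n P (i + 1) + Nat.nth (rpW m n P) (i + 1) = 2 * (i + 1) := by
  have hcount : Nat.count (rpW m n P) (Nat.nth (rpW m n P) (i + 1)) = i + 1 :=
    Nat.count_nth_of_infinite rpW_infinite _
  have hlt : Nat.nth (rpW m n P) (i + 1) < 2 * (m + n) + 1 :=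
    Nat.nth_lt_of_lt_count (by rw [count_rpW_top hP]; omega)
  refine ⟨Nat.pos_of_ne_zero fun h0 => ?_, by omega, ?_⟩
  · rw [h0, Nat.count_zero] at hcount; omega
  · rw [rpRank, rpHt_add hP (by omega), hcount]

theorem card_filter_nth_rpW_eq (hP : IsRP m n P) {K : ℕ} (hK : 1 ≤ K)
    (hKle : K ≤ 2 * (m + n)) :
    ((range (m + n)).filter fun i => Nat.nth (rpW m n P) (i + 1) = K).card =
      if rpW m n P K then 1 else 0 := by
  split_ifs with hw
  · have hpos : Nat.count (rpW m n P) 1 ≤ Nat.count (rpW m n P) K := Nat.count_monotone _ hK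
    have hup : Nat.count (rpW m n P) (K + 1) ≤ Nat.count (rpW m n P) (2 * (m + n) + 1) :=
      Nat.count_monotone _ (by omega)
    rw [Nat.count_succ, if_pos hw, count_rpW_top hP] at hup
    rw [Nat.count_succ, if_pos rpW_zero, Nat.count_zero] at hpos
    rw [card_eq_one]
    refine ⟨Nat.count (rpW m n P) K - 1, eq_singleton_iff_unique_mem.2 ⟨?_, fun i hi => ?_⟩⟩
    · exact mem_filter.2 ⟨mem_range.2 (by omega),
        by rw [Nat.sub_add_cancel (by omega), Nat.nth_count hw]⟩
    · rw [← (mem_filter.1 hi).2, Nat.count_nth_of_infinite rpW_infinite]; rfl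
  · exact card_eq_zero.2 (filter_eq_empty_iff.2 fun i _ h =>
      hw (h ▸ Nat.nth_mem_of_infinite rpW_infinite _))

variable (m n P) in
/-- The area word `|a_1| … |a_(m+n)|` of `φ(P)`. -/
def phiArea (i : ℕ) : ℕ := rpVal m n P (i + 1)

variable (m n P) in
/-- The labels of `φ(P)`: `1` on the barred letters, `2` on the others. -/
def phiLabel (i : ℕ) : ℕ := if rpRank m n P (i + 1) % 2 = 1 then 1 else 2

theorem phiLabel_eq_one_or_two (i : ℕ) : phiLabel m n P i = 1 ∨ phiLabel m n P i = 2 := by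
  unfold phiLabel; split_ifs <;> simp

/-- Row `i` of `φ(P)` comes from step `K = nth (i + 1)` of the Dyck path of `P`, which is step
`(K - 1) / 2` of the red path (`K` odd, label `1`) or of the green path (`K` even, label `2`). -/
theorem phi_col_label (hP : IsRP m n P) {i : ℕ} (hi : i < m + n) :
    i - phiArea m n P i = (Nat.nth (rpW m n P) (i + 1) - 1) / 2 ∧
      phiLabel m n P i = if Nat.nth (rpW m n P) (i + 1) % 2 = 1 then 1 else 2 := by
  obtain ⟨h1, -, hrank⟩ := nth_rpW_succ hP hi
  unfold phiArea phiLabel rpVal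
  refine ⟨by omega, ?_⟩
  have : rpRank m n P (i + 1) % 2 = 1 ↔ Nat.nth (rpW m n P) (i + 1) % 2 = 1 := by omega
  simp only [this]

theorem count_one_phiColLab (hP : IsRP m n P) {c : ℕ} (hc : c < m + n) :
    (ldColLab (m + n) (phiArea m n P) (phiLabel m n P) c).count 1 =
      if polyRedE m n P c then 0 else 1 := by
  rw [count_ldColLab]
  have hfilter : ((range (m + n)).filter fun i =>
      i - phiArea m n P i = c ∧ phiLabel m n P i = 1) =
      (range (m + n)).filter fun i => Nat.nth (rpW m n P) (i + 1) = 2 * c + 1 := by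
    refine filter_congr fun i hi => ?_
    obtain ⟨hcol, hlab⟩ := phi_col_label hP (mem_range.1 hi)
    have := (nth_rpW_succ hP (mem_range.1 hi)).1
    rw [hcol, hlab]
    split_ifs <;> omega
  rw [hfilter, card_filter_nth_rpW_eq hP (by omega) (by omega)]
  by_cases hr : polyRedE m n P c <;> simp [hr, rpW_odd hc]

theorem count_two_phiColLab (hP : IsRP m n P) {c : ℕ} (hc : c < m + n) :
    (ldColLab (m + n) (phiArea m n P) (phiLabel m n P) c).count 2 =
      if polyGreenE m n P c then 1 else 0 := by
  rw [count_ldColLab]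
  have hfilter : ((range (m + n)).filter fun i =>
      i - phiArea m n P i = c ∧ phiLabel m n P i = 2) =
      (range (m + n)).filter fun i => Nat.nth (rpW m n P) (i + 1) = 2 * c + 2 := by
    refine filter_congr fun i hi => ?_
    obtain ⟨hcol, hlab⟩ := phi_col_label hP (mem_range.1 hi)
    have := (nth_rpW_succ hP (mem_range.1 hi)).1
    rw [hcol, hlab]
    split_ifs <;> omega
  rw [hfilter, card_filter_nth_rpW_eq hP (by omega) (by omega)]
  by_cases hg : polyGreenE m n P c <;> simp [hg, rpW_even hc]

end Polyomino

/-! ### The bounce path -/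

section Bounce

variable {m n : ℕ} {P : PolyBase m n}

variable (m n P) in
/-- `(cornerX k, cornerY k)` is where the `k`-th horizontal run of the bounce path starts; it
ends at `(cornerX (k + 1), cornerY k)`. The step leaving `(x, y)` is step number `x + y`. -/
def cornerX (k : ℕ) : ℕ := (rpSeq m n P k).1

variable (m n P) in
def cornerY (k : ℕ) : ℕ := (rpSeq m n P k).2

theorem cornerX_succ (k : ℕ) :
    cornerX m n P (k + 1) = ((range m).filter fun x => gH m n P x ≤ cornerY m n P k).card := rfl

theorem cornerY_succ (k : ℕ) : cornerY m n P (k + 1) = rH m n P (cornerX m n P (k + 1)) := rfl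

theorem lt_cornerX_succ_iff (hP : IsRP m n P) {x : ℕ} (hx : x < m) (k : ℕ) :
    x < cornerX m n P (k + 1) ↔ gH m n P x ≤ cornerY m n P k :=
  lt_card_filter_range_iff (fun _ _ hab hb => (hP.gH_mono hab).trans hb) hx

theorem cornerX_le (k : ℕ) : cornerX m n P k ≤ m := by
  cases k with
  | zero => exact Nat.zero_le m
  | succ k => exact (card_filter_le _ _).trans_eq (card_range m)

theorem cornerY_le (k : ℕ) : cornerY m n P k ≤ n := by
  cases k with
  | zero => exact Nat.zero_le n
  | succ k => exact rH_le _

theorem cornerY_eq_of_cornerX_eq (k : ℕ) (h : cornerX m n P (k + 1) = m) :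
    cornerY m n P (k + 1) = n := by
  rw [cornerY_succ, h, rH_of_le le_rfl]

theorem cornerX_cornerY_mono (hP : IsRP m n P) (k : ℕ) :
    cornerX m n P k ≤ cornerX m n P (k + 1) ∧ cornerY m n P k ≤ cornerY m n P (k + 1) := by
  induction k with
  | zero => exact ⟨Nat.zero_le _, Nat.zero_le _⟩
  | succ k ih =>
    have hX : cornerX m n P (k + 1) ≤ cornerX m n P (k + 2) := by
      rw [cornerX_succ, cornerX_succ]
      exact card_le_card fun x hx => by
        rw [mem_filter] at hx ⊢
        exact ⟨hx.1, hx.2.trans ih.2⟩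
    exact ⟨hX, hP.rH_mono hX⟩

theorem cornerX_mono (hP : IsRP m n P) : Monotone (cornerX m n P) :=
  monotone_nat_of_le_succ fun k => (cornerX_cornerY_mono hP k).1

theorem cornerY_mono (hP : IsRP m n P) : Monotone (cornerY m n P) :=
  monotone_nat_of_le_succ fun k => (cornerX_cornerY_mono hP k).2

-- The bounce path does not stall before reaching `(m, n)`.
theorem cornerY_lt_succ (hP : IsRP m n P) {k : ℕ}
    (h : cornerX m n P (k + 1) + cornerY m n P k < m + n) :
    cornerY m n P k < cornerY m n P (k + 1) := by
  rcases (cornerX_le (P := P) (k + 1)).lt_or_eq with hlt | heq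
  · have hg : ¬ gH m n P (cornerX m n P (k + 1)) ≤ cornerY m n P k :=
      fun hg => lt_irrefl _ ((lt_cornerX_succ_iff hP hlt k).2 hg)
    have := hP.2.2 (cornerX m n P (k + 1))
    rw [cornerY_succ]
    omega
  · rw [cornerY_eq_of_cornerX_eq k heq]
    omega

theorem cornerX_succ_lt (hP : IsRP m n P) {k : ℕ}
    (h : cornerX m n P (k + 1) + cornerY m n P (k + 1) < m + n) :
    cornerX m n P (k + 1) < cornerX m n P (k + 2) := by
  have hlt : cornerX m n P (k + 1) < m := by
    refine (cornerX_le (k + 1)).lt_of_ne fun heq => ?_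
    rw [cornerY_eq_of_cornerX_eq k heq, heq] at h
    omega
  exact (lt_cornerX_succ_iff hP hlt (k + 1)).2 (hP.2.2 _)

theorem cornerSum_lt_succ (hP : IsRP m n P) {k : ℕ}
    (h : cornerX m n P k + cornerY m n P k < m + n) :
    cornerX m n P k + cornerY m n P k < cornerX m n P (k + 1) + cornerY m n P (k + 1) := by
  have hX := (cornerX_cornerY_mono hP k).1
  by_cases hrun : cornerX m n P (k + 1) + cornerY m n P k < m + n
  · have := cornerY_lt_succ hP hrun
    omega
  · have := (cornerX_cornerY_mono hP k).2
    omega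

theorem cornerSum_lt_of_lt (hP : IsRP m n P) {k₁ k₂ : ℕ} (hk : k₁ < k₂)
    (h : cornerX m n P k₁ + cornerY m n P k₁ < m + n) :
    cornerX m n P k₁ + cornerY m n P k₁ < cornerX m n P k₂ + cornerY m n P k₂ := by
  have := cornerSum_lt_succ hP h
  have := cornerX_mono hP (show k₁ + 1 ≤ k₂ by omega)
  have := cornerY_mono hP (show k₁ + 1 ≤ k₂ by omega)
  omega

theorem le_cornerSum (hP : IsRP m n P) {k : ℕ}
    (h : cornerX m n P k + cornerY m n P k < m + n) : k ≤ cornerX m n P k + cornerY m n P k := by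
  induction k with
  | zero => exact Nat.zero_le _
  | succ k ih =>
    have hmono : cornerX m n P k + cornerY m n P k ≤
        cornerX m n P (k + 1) + cornerY m n P (k + 1) := by
      have := cornerX_cornerY_mono hP k
      omega
    have := cornerSum_lt_succ hP (hmono.trans_lt h)
    have := ih (hmono.trans_lt h)
    omega

theorem rpBounce_eq_sum_corners : rpBounce m n P =
    ∑ k ∈ Icc 1 (m + n + 1), (m + n - (cornerX m n P k + cornerY m n P k)) := by
  have hH : ∑ x ∈ range m, rpHval m n P x =
      ∑ k ∈ Icc 1 (m + n + 1), (m - cornerX m n P k) := by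
    simp only [rpHval, card_filter]
    rw [sum_comm]
    refine sum_congr rfl fun k _ => ?_
    rw [← card_filter]
    change ((range m).filter fun x => cornerX m n P k ≤ x).card = _
    rw [show ((range m).filter fun x => cornerX m n P k ≤ x) = Ico (cornerX m n P k) m by
      ext; simp only [mem_filter, mem_range, mem_Ico]; omega, Nat.card_Ico]
  have hV : ∑ y ∈ Icc 1 n, rpVval m n P y =
      ∑ k ∈ Icc 1 (m + n + 1), (n - cornerY m n P k) := by
    simp only [rpVval, card_filter]
    rw [sum_comm]
    refine sum_congr rfl fun k _ => ?_
    rw [← card_filter]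
    change ((Icc 1 n).filter fun y => cornerY m n P k < y).card = _
    rw [show ((Icc 1 n).filter fun y => cornerY m n P k < y) = Icc (cornerY m n P k + 1) n by
      ext; simp only [mem_filter, mem_Icc]; omega, Nat.card_Icc]
    omega
  rw [rpBounce, hH, hV, ← sum_add_distrib]
  refine sum_congr rfl fun k _ => ?_
  have := cornerX_le (P := P) k
  have := cornerY_le (P := P) k
  omega

variable (m n P) in
def InEastRun (k j : ℕ) : Prop :=
  cornerX m n P k + cornerY m n P k ≤ j ∧ j < cornerX m n P (k + 1) + cornerY m n P k

variable (m n P) in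
def InNorthRun (k j : ℕ) : Prop :=
  cornerX m n P (k + 1) + cornerY m n P k ≤ j ∧
    j < cornerX m n P (k + 1) + cornerY m n P (k + 1)

theorem not_inEastRun_of_inNorthRun (hP : IsRP m n P) {k₁ k₂ j : ℕ}
    (hN : InNorthRun m n P k₂ j) : ¬ InEastRun m n P k₁ j := by
  rintro ⟨hE₁, hE₂⟩
  obtain ⟨hN₁, hN₂⟩ := hN
  rcases le_or_gt k₁ k₂ with h | h
  · have := cornerX_mono hP (show k₁ + 1 ≤ k₂ + 1 by omega)
    have := cornerY_mono hP h
    omega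
  · have := cornerX_mono hP (show k₂ + 1 ≤ k₁ by omega)
    have := cornerY_mono hP (show k₂ + 1 ≤ k₁ by omega)
    omega

theorem inNorthRun_inEastRun_of_cornerSum (hP : IsRP m n P) {k i : ℕ}
    (hk : cornerX m n P (k + 1) + cornerY m n P (k + 1) = i + 1) (hi : i + 1 < m + n) :
    InNorthRun m n P k i ∧ InEastRun m n P (k + 1) (i + 1) := by
  have hY := cornerY_lt_succ hP (k := k) (by have := (cornerX_cornerY_mono hP k).2; omega)
  have hX : cornerX m n P (k + 1) < cornerX m n P (k + 1 + 1) := cornerX_succ_lt hP (by omega)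
  exact ⟨⟨by omega, by omega⟩, ⟨by omega, by omega⟩⟩

end Bounce

/-! ### The parking algorithm on `φ(P)` follows the bounce path -/

section ParkingBounce

variable {m n : ℕ} {P : PolyBase m n}

variable (m n P) in
def parkSet (j : ℕ) : Multiset ℕ := (ldPAux (m + n) (phiArea m n P) (phiLabel m n P) j).1

variable (m n P) in
def parkLetter (j : ℕ) : ℕ := ldPword (m + n) (phiArea m n P) (phiLabel m n P) j

theorem mem_parkSet {j : ℕ} : ∀ x ∈ parkSet m n P j, x = 1 ∨ x = 2 := by
  intro x hx
  obtain ⟨i, rfl⟩ := mem_ldPAux_fst hx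
  exact phiLabel_eq_one_or_two i

theorem parkLetter_zero : parkLetter m n P 0 = parkChoice (parkSet m n P 0) 2 := by
  have hall : (parkSet m n P 0).filter (fun x => x ≤ 2) = parkSet m n P 0 :=
    Multiset.filter_eq_self.2 fun x hx => by rcases mem_parkSet x hx with rfl | rfl <;> norm_num
  rw [parkChoice, hall, ite_self]
  rfl

theorem parkSet_succ (j : ℕ) : parkSet m n P (j + 1) =
    (parkSet m n P j).erase (parkLetter m n P j) +
      ldColLab (m + n) (phiArea m n P) (phiLabel m n P) (j + 1) :=
  rfl

theorem parkLetter_succ (j : ℕ) :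
    parkLetter m n P (j + 1) = parkChoice (parkSet m n P (j + 1)) (parkLetter m n P j) := rfl

theorem count_parkSet_succ (hP : IsRP m n P) {j : ℕ} (hj : j + 1 < m + n) :
    (parkSet m n P (j + 1)).count 2 + eastCount m (gH m n P) (j + 1) =
        ((parkSet m n P j).erase (parkLetter m n P j)).count 2 +
          eastCount m (gH m n P) (j + 1 + 1) ∧
    (parkSet m n P (j + 1)).count 1 + eastCount m (rH m n P) (j + 1 + 1) =
        ((parkSet m n P j).erase (parkLetter m n P j)).count 1 +
          eastCount m (rH m n P) (j + 1) + 1 := by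
  rw [parkSet_succ, Multiset.count_add, Multiset.count_add, count_two_phiColLab hP hj,
    count_one_phiColLab hP hj]
  constructor
  · by_cases hg : polyGreenE m n P (j + 1)
    · rw [if_pos hg, eastCount_succ_of_exists hP.gH_mono hg]; omega
    · rw [if_neg hg, eastCount_succ_of_not hg]; omega
  · by_cases hr : polyRedE m n P (j + 1)
    · rw [if_pos hr, eastCount_succ_of_exists hP.rH_mono hr]; omega
    · rw [if_neg hr, eastCount_succ_of_not hr]; omega

variable (m n P) in
/-- The parking algorithm at column `j`, having used `x` labels `2` and `y` labels `1`, holds the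
labels of the green east and red north steps among the first `j + 1` steps, less the used ones. -/
def CountsAt (j x y : ℕ) : Prop :=
  (parkSet m n P j).count 2 + x = eastCount m (gH m n P) (j + 1) ∧
    (parkSet m n P j).count 1 + y + eastCount m (rH m n P) (j + 1) = j + 1

theorem countsAt_zero (hP : IsRP m n P) (h : 0 < m + n) : CountsAt m n P 0 0 0 := by
  rw [CountsAt, parkSet, ldPAux, count_two_phiColLab hP h, count_one_phiColLab hP h]
  constructor
  · by_cases hg : polyGreenE m n P 0
    · rw [if_pos hg, eastCount_succ_of_exists hP.gH_mono hg, eastCount_zero]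
    · rw [if_neg hg, eastCount_succ_of_not hg, eastCount_zero]
  · by_cases hr : polyRedE m n P 0
    · rw [if_pos hr, eastCount_succ_of_exists hP.rH_mono hr, eastCount_zero]
    · rw [if_neg hr, eastCount_succ_of_not hr, eastCount_zero]

theorem CountsAt.succ_two (hP : IsRP m n P) {j x y : ℕ} (h : CountsAt m n P j x y)
    (hp : parkLetter m n P j = 2) (hj : j + 1 < m + n) : CountsAt m n P (j + 1) (x + 1) y := by
  have hmem : 2 ∈ parkSet m n P j :=
    hp ▸ ldPword_mem_ldPAux (by rw [← parkLetter, hp]; norm_num)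
  have hpos := Multiset.count_pos.2 hmem
  obtain ⟨hx, hy⟩ := h
  obtain ⟨h2, h1⟩ := count_parkSet_succ hP hj
  rw [hp, Multiset.count_erase_self] at h2
  rw [hp, Multiset.count_erase_of_ne (by norm_num)] at h1
  exact ⟨by omega, by omega⟩

theorem CountsAt.succ_one (hP : IsRP m n P) {j x y : ℕ} (h : CountsAt m n P j x y)
    (hp : parkLetter m n P j = 1) (hj : j + 1 < m + n) : CountsAt m n P (j + 1) x (y + 1) := by
  have hmem : 1 ∈ parkSet m n P j :=
    hp ▸ ldPword_mem_ldPAux (by rw [← parkLetter, hp]; norm_num)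
  have hpos := Multiset.count_pos.2 hmem
  obtain ⟨hx, hy⟩ := h
  obtain ⟨h2, h1⟩ := count_parkSet_succ hP hj
  rw [hp, Multiset.count_erase_of_ne (by norm_num)] at h2
  rw [hp, Multiset.count_erase_self] at h1
  exact ⟨by omega, by omega⟩

theorem parkChoice_two_of_eastRun (hP : IsRP m n P) {j k : ℕ} (hj : j < m + n)
    (hlo : cornerX m n P k + cornerY m n P k ≤ j)
    (hhi : j ≤ cornerX m n P (k + 1) + cornerY m n P k)
    (hc : CountsAt m n P j (j - cornerY m n P k) (cornerY m n P k)) :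
    (parkChoice (parkSet m n P j) 2 = 2 ∧ InEastRun m n P k j) ∨
      (parkChoice (parkSet m n P j) 2 = 1 ∧ InNorthRun m n P k j ∧
        j = cornerX m n P (k + 1) + cornerY m n P k) := by
  obtain ⟨h2, h1⟩ := hc
  rcases hhi.lt_or_eq with hlt | heq
  · have hxm : j - cornerY m n P k < m := by have := cornerX_le (P := P) (k + 1); omega
    have hg := (lt_cornerX_succ_iff hP hxm k).1 (by omega)
    have hG := (lt_eastCount_iff hP.gH_mono (t := j + 1) hxm).2 (by omega)
    have hmem : 2 ∈ parkSet m n P j := Multiset.count_pos.1 (by omega)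
    exact Or.inl ⟨parkChoice_eq_two mem_parkSet hmem (Or.inl rfl), hlo, hlt⟩
  · have hG : eastCount m (gH m n P) (j + 1) ≤ cornerX m n P (k + 1) := by
      rcases (cornerX_le (P := P) (k + 1)).lt_or_eq with hcm | hcm
      · refine le_of_not_gt fun hlt => lt_irrefl (cornerX m n P (k + 1)) ?_
        have := (lt_eastCount_iff hP.gH_mono hcm).1 hlt
        exact (lt_cornerX_succ_iff hP hcm k).2 (by omega)
      · exact eastCount_le.trans hcm.ge
    have hR := hP.eastCount_rH_le_eastCount_gH (j + 1)
    have h2not : 2 ∉ parkSet m n P j := Multiset.count_eq_zero.1 (by omega)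
    have hmem : 1 ∈ parkSet m n P j := Multiset.count_pos.1 (by omega)
    have hY := cornerY_lt_succ hP (k := k) (by omega)
    exact Or.inr
      ⟨parkChoice_eq_one mem_parkSet hmem (Or.inr h2not), ⟨by omega, by omega⟩, heq⟩

theorem parkChoice_one_of_northRun (hP : IsRP m n P) {j k : ℕ} (hj : j < m + n)
    (hlo : cornerX m n P (k + 1) + cornerY m n P k ≤ j)
    (hhi : j ≤ cornerX m n P (k + 1) + cornerY m n P (k + 1))
    (hc : CountsAt m n P j (cornerX m n P (k + 1)) (j - cornerX m n P (k + 1))) :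
    (parkChoice (parkSet m n P j) 1 = 1 ∧ InNorthRun m n P k j) ∨
      (parkChoice (parkSet m n P j) 1 = 2 ∧ InEastRun m n P (k + 1) j) := by
  obtain ⟨h2, h1⟩ := hc
  have hYX := cornerY_succ (P := P) k
  rcases hhi.lt_or_eq with hlt | heq
  · have hR : eastCount m (rH m n P) (j + 1) ≤ cornerX m n P (k + 1) := by
      rcases (cornerX_le (P := P) (k + 1)).lt_or_eq with hcm | hcm
      · exact le_of_not_gt fun hlt' => by
          have := (lt_eastCount_iff hP.rH_mono hcm).1 hlt'
          omega
      · exact eastCount_le.trans hcm.ge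
    have hmem : 1 ∈ parkSet m n P j := Multiset.count_pos.1 (by omega)
    exact Or.inl ⟨parkChoice_eq_one mem_parkSet hmem (Or.inl rfl), hlo, hlt⟩
  · have hcm : cornerX m n P (k + 1) < m := by
      refine (cornerX_le (k + 1)).lt_of_ne fun hcm => ?_
      have := cornerY_eq_of_cornerX_eq k hcm
      omega
    have hR := (lt_eastCount_iff hP.rH_mono (t := j + 1) hcm).2 (by omega)
    have hG := hP.eastCount_rH_le_eastCount_gH (j + 1)
    have h1not : 1 ∉ parkSet m n P j := Multiset.count_eq_zero.1 (by omega)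
    have hmem : 2 ∈ parkSet m n P j := Multiset.count_pos.1 (by omega)
    have hX : cornerX m n P (k + 1) < cornerX m n P (k + 1 + 1) := cornerX_succ_lt hP (by omega)
    exact Or.inr ⟨parkChoice_eq_two mem_parkSet hmem (Or.inr h1not), ⟨by omega, by omega⟩⟩

variable (m n P) in
def ParkFollowsBounce (j : ℕ) : Prop := ∃ k,
  (parkLetter m n P j = 2 ∧ InEastRun m n P k j ∧
      CountsAt m n P j (j - cornerY m n P k) (cornerY m n P k)) ∨
    (parkLetter m n P j = 1 ∧ InNorthRun m n P k j ∧
      CountsAt m n P j (cornerX m n P (k + 1)) (j - cornerX m n P (k + 1)))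

theorem parkFollowsBounce_zero (hP : IsRP m n P) (h : 0 < m + n) :
    ParkFollowsBounce m n P 0 := by
  have hc := countsAt_zero hP h
  rcases parkChoice_two_of_eastRun hP (k := 0) h le_rfl (Nat.zero_le _) hc with
    ⟨hp, hE⟩ | ⟨hp, hN, heq⟩
  · exact ⟨0, Or.inl ⟨parkLetter_zero.trans hp, hE, hc⟩⟩
  · refine ⟨0, Or.inr ⟨parkLetter_zero.trans hp, hN, ?_⟩⟩
    have hX : cornerX m n P (0 + 1) = 0 := by
      have : cornerY m n P 0 = 0 := rfl
      omega
    rwa [hX]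

theorem ParkFollowsBounce.succ (hP : IsRP m n P) {j : ℕ} (hinv : ParkFollowsBounce m n P j)
    (hj : j + 1 < m + n) :
    ParkFollowsBounce m n P (j + 1) := by
  obtain ⟨k, ⟨hp, ⟨hlo, hhi⟩, hc⟩ | ⟨hp, ⟨hlo, hhi⟩, hc⟩⟩ := hinv
  · have hc' := hc.succ_two hP hp hj
    rw [show j - cornerY m n P k + 1 = j + 1 - cornerY m n P k by omega] at hc'
    rcases parkChoice_two_of_eastRun hP hj (by omega) hhi hc' with ⟨hq, hE⟩ | ⟨hq, hN, heq⟩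
    · exact ⟨k, Or.inl ⟨(parkLetter_succ j).trans (hp ▸ hq), hE, hc'⟩⟩
    · refine ⟨k, Or.inr ⟨(parkLetter_succ j).trans (hp ▸ hq), hN, ?_⟩⟩
      rwa [show j + 1 - cornerY m n P k = cornerX m n P (k + 1) by omega,
        show cornerY m n P k = j + 1 - cornerX m n P (k + 1) by omega] at hc'
  · have hc' := hc.succ_one hP hp hj
    rw [show j - cornerX m n P (k + 1) + 1 = j + 1 - cornerX m n P (k + 1) by omega] at hc'
    rcases parkChoice_one_of_northRun hP hj (by omega) hhi hc' with ⟨hq, hN⟩ | ⟨hq, hE⟩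
    · exact ⟨k, Or.inr ⟨(parkLetter_succ j).trans (hp ▸ hq), hN, hc'⟩⟩
    · refine ⟨k + 1, Or.inl ⟨(parkLetter_succ j).trans (hp ▸ hq), hE, ?_⟩⟩
      obtain ⟨hE₁, -⟩ := hE
      rwa [show j + 1 - cornerX m n P (k + 1) = cornerY m n P (k + 1) by omega,
        show cornerX m n P (k + 1) = j + 1 - cornerY m n P (k + 1) by omega] at hc'

theorem parkFollowsBounce (hP : IsRP m n P) {j : ℕ} (hj : j < m + n) :
    ParkFollowsBounce m n P j := by
  induction j with
  | zero => exact parkFollowsBounce_zero hP hj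
  | succ j ih => exact (ih (by omega)).succ hP hj

theorem parkLetter_lt_succ_iff (hP : IsRP m n P) {i : ℕ} (hi : i + 1 < m + n) :
    parkLetter m n P i < parkLetter m n P (i + 1) ↔
      ∃ k ∈ Icc 1 (m + n + 1), cornerX m n P k + cornerY m n P k = i + 1 := by
  obtain ⟨k₀, h₀⟩ := parkFollowsBounce hP (j := i) (by omega)
  obtain ⟨k₁, h₁⟩ := parkFollowsBounce hP hi
  constructor
  · intro hlt
    rcases h₀ with ⟨hp₀, -, -⟩ | ⟨hp₀, ⟨hN₀, hN₀'⟩, -⟩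
    · rcases h₁ with ⟨hp₁, -, -⟩ | ⟨hp₁, -, -⟩ <;> omega
    rcases h₁ with ⟨-, hE₁, -⟩ | ⟨hp₁, -, -⟩
    · have hcorner : cornerX m n P (k₀ + 1) + cornerY m n P (k₀ + 1) = i + 1 := by
        by_contra hne
        exact not_inEastRun_of_inNorthRun hP (k₂ := k₀) ⟨by omega, by omega⟩ hE₁
      have := le_cornerSum hP (k := k₀ + 1) (by omega)
      exact ⟨k₀ + 1, mem_Icc.2 ⟨by omega, by omega⟩, hcorner⟩
    · omega
  · rintro ⟨k, hk, hsum⟩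
    obtain ⟨k, rfl⟩ : ∃ k', k = k' + 1 := ⟨k - 1, by rw [mem_Icc] at hk; omega⟩
    obtain ⟨hN, hE⟩ := inNorthRun_inEastRun_of_cornerSum hP hsum hi
    rcases h₀ with ⟨-, hE₀, -⟩ | ⟨hp₀, -, -⟩
    · exact absurd hE₀ (not_inEastRun_of_inNorthRun hP hN)
    rcases h₁ with ⟨hp₁, -, -⟩ | ⟨-, hN₁, -⟩
    · omega
    · exact absurd hE (not_inEastRun_of_inNorthRun hP hN₁)

end ParkingBounce

theorem sum_corners_eq_sum_ascents {m n : ℕ} {P : PolyBase m n} (hP : IsRP m n P) :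
    ∑ k ∈ Icc 1 (m + n + 1), (m + n - (cornerX m n P k + cornerY m n P k)) =
      ∑ i ∈ (range (m + n - 1)).filter (fun i => parkLetter m n P i < parkLetter m n P (i + 1)),
        (m + n - 1 - i) := by
  rw [← sum_filter_of_ne (p := fun k => cornerX m n P k + cornerY m n P k < m + n)
    fun k _ hk => by omega]
  have hpos : ∀ k ∈ (Icc 1 (m + n + 1)).filter
      (fun k => cornerX m n P k + cornerY m n P k < m + n),
      0 < cornerX m n P k + cornerY m n P k := fun k hk => by
    rw [mem_filter, mem_Icc] at hk
    exact (Nat.zero_le _).trans_lt (cornerSum_lt_of_lt hP (k₁ := 0) (by omega) (by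
      have : cornerX m n P 0 + cornerY m n P 0 = 0 := rfl
      omega))
  refine sum_bij (fun k _ => cornerX m n P k + cornerY m n P k - 1) (fun k hk => ?_)
    (fun k₁ hk₁ k₂ hk₂ heq => ?_) (fun i hi => ?_) (fun k hk => ?_)
  · have := hpos k hk
    rw [mem_filter, mem_Icc] at hk
    rw [mem_filter, mem_range, parkLetter_lt_succ_iff hP (by omega)]
    exact ⟨by omega, k, mem_Icc.2 hk.1, by omega⟩
  · have := hpos k₁ hk₁
    have := hpos k₂ hk₂
    rw [mem_filter] at hk₁ hk₂
    by_contra hne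
    rcases lt_or_gt_of_ne hne with h | h
    · have := cornerSum_lt_of_lt hP h hk₁.2; omega
    · have := cornerSum_lt_of_lt hP h hk₂.2; omega
  · rw [mem_filter, mem_range] at hi
    obtain ⟨k, hk, hsum⟩ := (parkLetter_lt_succ_iff hP (by omega)).1 hi.2
    exact ⟨k, mem_filter.2 ⟨hk, by omega⟩, by omega⟩
  · have := hpos k hk
    omega

/-- for a reduced polyomino `P ∈ RP(m,n)` with area word
`0 a_1 … a_(m+n)`, let `φ(P)` be the two car parking function whose area word is
`|a_1| … |a_(m+n)|`, with `i`-th label `1` if `a_i` is barred and `2` otherwise.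
Then `bounce(P) = pmaj(φ(P))`. -/
theorem statement16 (m n : ℕ) (P : PolyBase m n) (hP : IsRP m n P) :
    rpBounce m n P =
      ldPmaj (m + n) (fun i => rpVal m n P (i + 1))
        (fun i => if rpRank m n P (i + 1) % 2 = 1 then 1 else 2) := by
  rw [rpBounce_eq_sum_corners, sum_corners_eq_sum_ascents hP]
  exact ldPmaj_eq_sum_ascents.symm

end DeltaConj
end
end
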